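/- arXiv:math/0102208 — 12 statements merged into one kernel-verified Lean document; each statement's English description precedes it below -/
import Mathlib

section
/- Let p and q be coprime integers with 0 < p < q. Then σ(p,q) = 2·Σ_{i=1}^{⌊(p−1)/2⌋} ( ⌊(p−2i)q/(2p)⌋ − ⌊(3p−2⌊p/2⌋−2i)q/(2p)⌋ ) + (p−1−2⌊p/2⌋)(q−1). -/
/-- `σ⁺(p,q)`: the number of integer pairs `(i,j)` with `0 < i < p`, `0 < j < q`, and
either `0 < i/p + j/q < 1/2` or `3/2 < i/p + j/q < 2`. -/
noncomputable def sigmaPlus (p q : ℤ) : ℤ :=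
  ((Finset.Ioo 0 p ×ˢ Finset.Ioo 0 q).filter (fun x =>
    (0 < (x.1 : ℚ) / (p : ℚ) + (x.2 : ℚ) / (q : ℚ) ∧
      (x.1 : ℚ) / (p : ℚ) + (x.2 : ℚ) / (q : ℚ) < 1 / 2) ∨
    (3 / 2 < (x.1 : ℚ) / (p : ℚ) + (x.2 : ℚ) / (q : ℚ) ∧
      (x.1 : ℚ) / (p : ℚ) + (x.2 : ℚ) / (q : ℚ) < 2))).card

/-- `σ⁻(p,q)`: the number of integer pairs `(i,j)` with `0 < i < p`, `0 < j < q`, and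
`1/2 < i/p + j/q < 3/2`. -/
noncomputable def sigmaMinus (p q : ℤ) : ℤ :=
  ((Finset.Ioo 0 p ×ˢ Finset.Ioo 0 q).filter (fun x =>
    1 / 2 < (x.1 : ℚ) / (p : ℚ) + (x.2 : ℚ) / (q : ℚ) ∧
      (x.1 : ℚ) / (p : ℚ) + (x.2 : ℚ) / (q : ℚ) < 3 / 2)).card

/-- `σ(p,q) = σ⁺(p,q) − σ⁻(p,q)`, the signature of the `(p,q)`-torus knot
(by Litherland's formula). -/
noncomputable def torusSigma (p q : ℤ) : ℤ := sigmaPlus p q - sigmaMinus p q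



lemma floor_eq_ediv' (a b : ℤ) (hb : 0 ≤ b) : ⌊(a:ℚ)/(b:ℚ)⌋ = a / b := by
  lift b to ℕ using hb
  rw [show ((b:ℤ):ℚ) = ((b:ℕ):ℚ) by push_cast; ring]
  exact Rat.floor_intCast_div_natCast a b

lemma card_filter_prod (P : ℤ × ℤ → Prop) [DecidablePred P] (s t : Finset ℤ) :
    ((s ×ˢ t).filter P).card = ∑ i ∈ s, (t.filter (fun j => P (i, j))).card := by
  rw [Finset.card_filter, Finset.sum_product]
  refine Finset.sum_congr rfl fun i _ => ?_
  rw [Finset.card_filter]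

lemma frac_lt_iff (p q i j n d : ℤ) (hp : 0 < p) (hq : 0 < q) (hd : 0 < d) :
    ((i:ℚ)/(p:ℚ) + (j:ℚ)/(q:ℚ) < (n:ℚ)/(d:ℚ)) ↔ d*(i*q+j*p) < n*(p*q) := by
  have hp' : (0:ℚ) < (p:ℚ) := by exact_mod_cast hp
  have hq' : (0:ℚ) < (q:ℚ) := by exact_mod_cast hq
  have hd' : (0:ℚ) < (d:ℚ) := by exact_mod_cast hd
  have hform : (i:ℚ)/(p:ℚ) + (j:ℚ)/(q:ℚ) = ((i*q+j*p : ℤ) : ℚ) / ((p*q : ℤ) : ℚ) := by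
    push_cast; field_simp
  rw [hform, div_lt_div_iff₀ (by push_cast; positivity) hd',
    show ((i*q+j*p : ℤ):ℚ)*(d:ℚ) = ((d*(i*q+j*p) : ℤ):ℚ) by push_cast; ring,
    show (n:ℚ)*((p*q:ℤ):ℚ) = ((n*(p*q) : ℤ):ℚ) by push_cast; ring]
  exact Int.cast_lt

lemma frac_gt_iff (p q i j n d : ℤ) (hp : 0 < p) (hq : 0 < q) (hd : 0 < d) :
    ((n:ℚ)/(d:ℚ) < (i:ℚ)/(p:ℚ) + (j:ℚ)/(q:ℚ)) ↔ n*(p*q) < d*(i*q+j*p) := by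
  have hp' : (0:ℚ) < (p:ℚ) := by exact_mod_cast hp
  have hq' : (0:ℚ) < (q:ℚ) := by exact_mod_cast hq
  have hd' : (0:ℚ) < (d:ℚ) := by exact_mod_cast hd
  have hform : (i:ℚ)/(p:ℚ) + (j:ℚ)/(q:ℚ) = ((i*q+j*p : ℤ) : ℚ) / ((p*q : ℤ) : ℚ) := by
    push_cast; field_simp
  rw [hform, div_lt_div_iff₀ hd' (by push_cast; positivity),
    show ((i*q+j*p : ℤ):ℚ)*(d:ℚ) = ((d*(i*q+j*p) : ℤ):ℚ) by push_cast; ring,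
    show (n:ℚ)*((p*q:ℤ):ℚ) = ((n*(p*q) : ℤ):ℚ) by push_cast; ring]
  exact Int.cast_lt


lemma two_i_eq_p (p q i : ℤ) (hp : 0 < p) (hi0 : 0 < i) (hip : i < p)
    (hco : Int.gcd p q = 1) (hd : p ∣ 2*i*q) : 2*i = p := by
  have hcop : IsCoprime p q := Int.isCoprime_iff_gcd_eq_one.mpr hco
  have hd2 : p ∣ 2*i := hcop.dvd_of_dvd_mul_right hd
  obtain ⟨c, hc⟩ := hd2
  have h0 : 0 < c := by by_contra h; push_neg at h; nlinarith
  have h2 : c < 2 := by by_contra h; push_neg at h; nlinarith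
  have hc1 : c = 1 := by omega
  rw [hc1, mul_one] at hc
  exact hc

lemma boundary1 (p q i j : ℤ) (hp : 0 < p) (hq : 0 < q) (hco : Int.gcd p q = 1)
    (hi0 : 0 < i) (hip : i < p) (hj0 : 0 < j) (hjq : j < q) :
    2*(i*q + j*p) ≠ p*q := by
  intro h
  have hd : p ∣ 2*i*q := ⟨q - 2*j, by linarith⟩
  have h2i : 2*i = p := two_i_eq_p p q i hp hi0 hip hco hd
  have h3 : (2*i)*q = p*q := by rw [h2i]
  nlinarith [mul_pos hj0 hp]

lemma boundary3 (p q i j : ℤ) (hp : 0 < p) (hq : 0 < q) (hco : Int.gcd p q = 1)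
    (hi0 : 0 < i) (hip : i < p) (hj0 : 0 < j) (hjq : j < q) :
    2*(i*q + j*p) ≠ 3*(p*q) := by
  intro h
  have hd : p ∣ 2*i*q := ⟨3*q - 2*j, by linarith⟩
  have h2i : 2*i = p := two_i_eq_p p q i hp hi0 hip hco hd
  have h3 : (2*i)*q = p*q := by rw [h2i]
  nlinarith [mul_lt_mul_of_pos_right hjq hp]

lemma count_lt (p q : ℤ) (hp : 0 < p) (hq : 0 < q) (hco : Int.gcd p q = 1)
    (i : ℤ) (hi0 : 0 < i) (hip : i < p) :
    ((((Finset.Ioo (0:ℤ) q).filter (fun j => 2*(i*q + j*p) < p*q)).card : ℤ))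
      = if 2*i < p then (p - 2*i)*q / (2*p) else 0 := by
  have h2p : (0:ℤ) < 2*p := by omega
  split_ifs with h2i
  · set a : ℤ := (p - 2*i)*q / (2*p) with ha
    have ha0 : 0 ≤ a := Int.ediv_nonneg (by nlinarith) (by omega)
    have hset : (Finset.Ioo (0:ℤ) q).filter (fun j => 2*(i*q + j*p) < p*q)
        = Finset.Ioo 0 (a+1) := by
      ext j
      simp only [Finset.mem_filter, Finset.mem_Ioo]
      constructor
      · rintro ⟨⟨hj0, hjq⟩, hlt⟩
        refine ⟨hj0, ?_⟩
        have : j ≤ a := by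
          rw [ha, Int.le_ediv_iff_mul_le h2p]
          nlinarith
        omega
      · rintro ⟨hj0, hja⟩
        have hja' : j ≤ a := by omega
        have hmul : j * (2*p) ≤ (p - 2*i)*q := by
          rw [← Int.le_ediv_iff_mul_le h2p]; exact hja'
        have hjq : j < q := by nlinarith
        have hne := boundary1 p q i j hp hq hco hi0 hip hj0 hjq
        refine ⟨⟨hj0, hjq⟩, ?_⟩
        have : 2*(i*q + j*p) ≤ p*q := by nlinarith
        omega
    rw [hset, Int.card_Ioo]
    omega
  · have hset : (Finset.Ioo (0:ℤ) q).filter (fun j => 2*(i*q + j*p) < p*q) = ∅ := by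
      refine Finset.filter_false_of_mem fun j hj => ?_
      simp only [Finset.mem_Ioo] at hj
      push_neg
      nlinarith [hj.1]
    rw [hset]
    simp

lemma count_gt (p q : ℤ) (hp : 0 < p) (hq : 0 < q) (hco : Int.gcd p q = 1)
    (i : ℤ) (hi0 : 0 < i) (hip : i < p) :
    ((((Finset.Ioo (0:ℤ) q).filter (fun j => 3*(p*q) < 2*(i*q + j*p))).card : ℤ))
      = if p < 2*i then q - 1 - (3*p - 2*i)*q / (2*p) else 0 := by
  have h2p : (0:ℤ) < 2*p := by omega
  split_ifs with h2i
  · set b : ℤ := (3*p - 2*i)*q / (2*p) with hb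
    have hb0 : 0 ≤ b := Int.ediv_nonneg (by nlinarith) (by omega)
    have hbq : b < q := by
      have : ¬ q ≤ b := by
        rw [hb, Int.le_ediv_iff_mul_le h2p]
        intro h
        nlinarith
      omega
    have hset : (Finset.Ioo (0:ℤ) q).filter (fun j => 3*(p*q) < 2*(i*q + j*p))
        = Finset.Ioo b q := by
      ext j
      simp only [Finset.mem_filter, Finset.mem_Ioo]
      constructor
      · rintro ⟨⟨hj0, hjq⟩, hgt⟩
        refine ⟨?_, hjq⟩
        have : ¬ j ≤ b := by
          rw [hb, Int.le_ediv_iff_mul_le h2p]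
          intro h
          nlinarith
        omega
      · rintro ⟨hbj, hjq⟩
        have hj0 : 0 < j := by omega
        refine ⟨⟨hj0, hjq⟩, ?_⟩
        have : ¬ j * (2*p) ≤ (3*p - 2*i)*q := by
          rw [← Int.le_ediv_iff_mul_le h2p]
          omega
        push_neg at this
        nlinarith
    rw [hset, Int.card_Ioo]
    omega
  · have hset : (Finset.Ioo (0:ℤ) q).filter (fun j => 3*(p*q) < 2*(i*q + j*p)) = ∅ := by
      refine Finset.filter_false_of_mem fun j hj => ?_
      simp only [Finset.mem_Ioo] at hj
      push_neg
      nlinarith [hj.1, hj.2]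
    rw [hset]
    simp

/-- Litherland-type formula for the torus knot signature (Proposition 2.1). -/
theorem torusSigma_formula (p q : ℤ) (hp : 0 < p) (hpq : p < q) (hco : Int.gcd p q = 1) :
    torusSigma p q =
      2 * ∑ i ∈ Finset.Icc (1 : ℤ) ((p - 1) / 2),
        (⌊(((p - 2 * i) * q : ℤ) : ℚ) / ((2 * p : ℤ) : ℚ)⌋ -
          ⌊(((3 * p - 2 * (p / 2) - 2 * i) * q : ℤ) : ℚ) / ((2 * p : ℤ) : ℚ)⌋)
        + (p - 1 - 2 * (p / 2)) * (q - 1) := by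
  have hq : 0 < q := hp.trans hpq
  set m : ℤ := (p - 1) / 2 with hm
  -- the integer predicate
  set Pint : ℤ × ℤ → Prop := fun x =>
    2*(x.1*q + x.2*p) < p*q ∨ 3*(p*q) < 2*(x.1*q + x.2*p) with hPint
  have hiff : ∀ x ∈ Finset.Ioo (0:ℤ) p ×ˢ Finset.Ioo (0:ℤ) q,
      (((0 < (x.1 : ℚ) / (p : ℚ) + (x.2 : ℚ) / (q : ℚ) ∧
        (x.1 : ℚ) / (p : ℚ) + (x.2 : ℚ) / (q : ℚ) < 1 / 2) ∨
      (3 / 2 < (x.1 : ℚ) / (p : ℚ) + (x.2 : ℚ) / (q : ℚ) ∧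
        (x.1 : ℚ) / (p : ℚ) + (x.2 : ℚ) / (q : ℚ) < 2))) ↔ Pint x := by
    intro x hx
    simp only [Finset.mem_product, Finset.mem_Ioo] at hx
    obtain ⟨⟨hi0, hip⟩, ⟨hj0, hjq⟩⟩ := hx
    have h12 := frac_lt_iff p q x.1 x.2 1 2 hp hq two_pos
    have h32 := frac_gt_iff p q x.1 x.2 3 2 hp hq two_pos
    have h01 := frac_gt_iff p q x.1 x.2 0 1 hp hq one_pos
    have h21 := frac_lt_iff p q x.1 x.2 2 1 hp hq one_pos
    norm_num at h12 h32 h01 h21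
    rw [h12, h32, h01, h21, hPint]
    have hpos : 0 < x.1*q + x.2*p := by nlinarith
    have hlt2 : x.1*q + x.2*p < 2*(p*q) := by nlinarith
    constructor
    · rintro (⟨_, h⟩ | ⟨h, _⟩)
      · exact Or.inl h
      · exact Or.inr h
    · rintro (h | h)
      · exact Or.inl ⟨hpos, h⟩
      · exact Or.inr ⟨h, hlt2⟩
  have hiffm : ∀ x ∈ Finset.Ioo (0:ℤ) p ×ˢ Finset.Ioo (0:ℤ) q,
      ((1 / 2 < (x.1 : ℚ) / (p : ℚ) + (x.2 : ℚ) / (q : ℚ) ∧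
        (x.1 : ℚ) / (p : ℚ) + (x.2 : ℚ) / (q : ℚ) < 3 / 2)) ↔ ¬ Pint x := by
    intro x hx
    simp only [Finset.mem_product, Finset.mem_Ioo] at hx
    obtain ⟨⟨hi0, hip⟩, ⟨hj0, hjq⟩⟩ := hx
    have h12 := frac_gt_iff p q x.1 x.2 1 2 hp hq two_pos
    have h32 := frac_lt_iff p q x.1 x.2 3 2 hp hq two_pos
    norm_num at h12 h32
    simp only [h12, h32, hPint]
    have hb1 := boundary1 p q x.1 x.2 hp hq hco hi0 hip hj0 hjq
    have hb3 := boundary3 p q x.1 x.2 hp hq hco hi0 hip hj0 hjq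
    push_neg
    constructor
    · rintro ⟨h1, h2⟩; exact ⟨le_of_lt h1, le_of_lt h2⟩
    · rintro ⟨h1, h2⟩
      exact ⟨lt_of_le_of_ne h1 (Ne.symm hb1), lt_of_le_of_ne h2 hb3⟩
  have eplus : sigmaPlus p q =
      (((Finset.Ioo (0:ℤ) p ×ˢ Finset.Ioo (0:ℤ) q).filter Pint).card : ℤ) := by
    unfold sigmaPlus
    rw [Finset.filter_congr hiff]
  have eminus : sigmaMinus p q =
      (((Finset.Ioo (0:ℤ) p ×ˢ Finset.Ioo (0:ℤ) q).filter (fun x => ¬ Pint x)).card : ℤ) := by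
    unfold sigmaMinus
    rw [Finset.filter_congr hiffm]
  -- total count
  have htotal : (((Finset.Ioo (0:ℤ) p ×ˢ Finset.Ioo (0:ℤ) q)).card : ℤ) = (p-1)*(q-1) := by
    rw [Finset.card_product, Int.card_Ioo, Int.card_Ioo]
    push_cast
    rw [Int.toNat_of_nonneg (by omega), Int.toNat_of_nonneg (by omega)]
    ring
  -- sigmaMinus = total - sigmaPlus
  have hminus : sigmaMinus p q = (p-1)*(q-1) - sigmaPlus p q := by
    rw [eplus, eminus, ← htotal,
      ← Finset.card_filter_add_card_filter_not (s := Finset.Ioo (0:ℤ) p ×ˢ Finset.Ioo (0:ℤ) q) (p := Pint)]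
    push_cast
    ring
  -- sigmaPlus as sums
  have hplus : sigmaPlus p q =
      (∑ i ∈ Finset.Icc (1:ℤ) m, (p - 2*i)*q / (2*p))
        + (∑ i ∈ Finset.Icc (1:ℤ) m, (q - 1 - (3*p - 2*(p/2) - 2*i)*q / (2*p))) := by
    rw [eplus, card_filter_prod]
    push_cast
    have hterm : ∀ i ∈ Finset.Ioo (0:ℤ) p,
        (((Finset.Ioo (0:ℤ) q).filter (fun j => Pint (i, j))).card : ℤ)
          = (if 2*i < p then (p - 2*i)*q / (2*p) else 0)
            + (if p < 2*i then q - 1 - (3*p - 2*i)*q / (2*p) else 0) := by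
      intro i hi
      simp only [Finset.mem_Ioo] at hi
      have hsplit : (Finset.Ioo (0:ℤ) q).filter (fun j => Pint (i, j))
          = ((Finset.Ioo (0:ℤ) q).filter (fun j => 2*(i*q + j*p) < p*q))
            ∪ ((Finset.Ioo (0:ℤ) q).filter (fun j => 3*(p*q) < 2*(i*q + j*p))) := by
        rw [← Finset.filter_or]
      have hdisj : Disjoint ((Finset.Ioo (0:ℤ) q).filter (fun j => 2*(i*q + j*p) < p*q))
          ((Finset.Ioo (0:ℤ) q).filter (fun j => 3*(p*q) < 2*(i*q + j*p))) := by
        rw [Finset.disjoint_filter]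
        intro j _ h1
        nlinarith
      rw [hsplit, Finset.card_union_of_disjoint hdisj]
      push_cast
      rw [count_lt p q hp hq hco i hi.1 hi.2, count_gt p q hp hq hco i hi.1 hi.2]
    rw [Finset.sum_congr rfl hterm, Finset.sum_add_distrib]
    congr 1
    · rw [← Finset.sum_filter]
      congr 1
      ext i
      simp only [Finset.mem_filter, Finset.mem_Ioo, Finset.mem_Icc]
      omega
    · rw [← Finset.sum_filter]
      have hfs : (Finset.Ioo (0:ℤ) p).filter (fun i => p < 2*i)
          = Finset.Icc (p/2 + 1) (p - 1) := by
        ext i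
        simp only [Finset.mem_filter, Finset.mem_Ioo, Finset.mem_Icc]
        omega
      rw [hfs, show Finset.Icc (p/2 + 1) (p - 1)
          = (Finset.Icc (1:ℤ) m).map (addLeftEmbedding (p/2)) by
        rw [Finset.map_add_left_Icc]; congr 1 <;> omega, Finset.sum_map]
      refine Finset.sum_congr rfl fun k _ => ?_
      simp only [addLeftEmbedding_apply]
      have : 3*p - 2*(p/2 + k) = 3*p - 2*(p/2) - 2*k := by ring
      rw [this]
  -- final algebra
  have hfloor1 : ∀ i : ℤ, ⌊(((p - 2 * i) * q : ℤ) : ℚ) / ((2 * p : ℤ) : ℚ)⌋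
      = (p - 2*i)*q / (2*p) := fun i => floor_eq_ediv' _ _ (by omega)
  have hfloor2 : ∀ i : ℤ, ⌊(((3 * p - 2 * (p / 2) - 2 * i) * q : ℤ) : ℚ) / ((2 * p : ℤ) : ℚ)⌋
      = (3*p - 2*(p/2) - 2*i)*q / (2*p) := fun i => floor_eq_ediv' _ _ (by omega)
  have hcard : ((Finset.Icc (1:ℤ) m).card : ℤ) = m := by
    rw [Int.card_Icc]
    omega
  have e1 : (∑ i ∈ Finset.Icc (1:ℤ) m, (q - 1 - (3*p - 2*(p/2) - 2*i)*q / (2*p)))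
      = m*(q-1) - ∑ i ∈ Finset.Icc (1:ℤ) m, (3*p - 2*(p/2) - 2*i)*q / (2*p) := by
    rw [Finset.sum_sub_distrib, Finset.sum_const, nsmul_eq_mul, hcard]
  have e2 : (∑ i ∈ Finset.Icc (1:ℤ) m,
      (⌊(((p - 2 * i) * q : ℤ) : ℚ) / ((2 * p : ℤ) : ℚ)⌋ -
        ⌊(((3 * p - 2 * (p / 2) - 2 * i) * q : ℤ) : ℚ) / ((2 * p : ℤ) : ℚ)⌋))
      = (∑ i ∈ Finset.Icc (1:ℤ) m, (p - 2*i)*q / (2*p))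
        - ∑ i ∈ Finset.Icc (1:ℤ) m, (3*p - 2*(p/2) - 2*i)*q / (2*p) := by
    simp only [hfloor1, hfloor2]
    rw [Finset.sum_sub_distrib]
  have hpm : p - 1 - 2 * (p / 2) = 2*m - (p - 1) := by omega
  rw [torusSigma, hminus, hplus, e1, e2, hpm]
  ring
end

section
/- Let p and q be coprime integers with 0 < p < q. Then σ(p,q) ≤ −2⌊p/2⌋⌊q/2⌋. -/
lemma sum_distinct_nonneg : ∀ (n : ℕ) (s : Finset ℤ), s.card = n → (∀ x ∈ s, 0 ≤ x) →
    (n : ℤ) * (n - 1) ≤ 2 * ∑ x ∈ s, x := by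
  intro n
  induction n with
  | zero =>
    intro s h hpos
    rw [Finset.card_eq_zero] at h
    simp [h]
  | succ n ih =>
    intro s hcard hpos
    have hne : s.Nonempty := by rw [← Finset.card_pos, hcard]; omega
    set M := s.max' hne with hM
    have hMs : M ∈ s := s.max'_mem hne
    have hM0 : 0 ≤ M := hpos M hMs
    have hsub : s ⊆ Finset.Icc 0 M := by
      intro x hx
      rw [Finset.mem_Icc]
      exact ⟨hpos x hx, s.le_max' x hx⟩
    have hle : s.card ≤ (Finset.Icc (0:ℤ) M).card := Finset.card_le_card hsub
    rw [Int.card_Icc] at hle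
    have hMn : (n : ℤ) ≤ M := by
      rw [hcard] at hle
      omega
    have herase : (s.erase M).card = n := by rw [Finset.card_erase_of_mem hMs, hcard]; omega
    have h2 := ih (s.erase M) herase (fun x hx => hpos x (Finset.mem_of_mem_erase hx))
    have hsum : M + ∑ x ∈ s.erase M, x = ∑ x ∈ s, x := Finset.add_sum_erase s id hMs
    push_cast
    nlinarith [h2, hMn, hsum]

lemma sum_injOn_ge (t : Finset ℤ) (g : ℤ → ℤ) (hinj : ∀ x ∈ t, ∀ y ∈ t, g x = g y → x = y)
    (h0 : ∀ i ∈ t, 0 ≤ g i) :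
    (t.card : ℤ) * (t.card - 1) ≤ 2 * ∑ i ∈ t, g i := by
  have hs : ∑ x ∈ t.image g, x = ∑ i ∈ t, g i := Finset.sum_image hinj
  have hc : (t.image g).card = t.card :=
    Finset.card_image_of_injOn (fun x hx y hy h => hinj x hx y hy h)
  rw [← hs, ← hc]
  exact sum_distinct_nonneg _ _ rfl (by
    intro x hx
    rw [Finset.mem_image] at hx
    obtain ⟨i, hi, rfl⟩ := hx
    exact h0 i hi)

lemma sum_Ioc_nat_id : ∀ (n : ℕ), 2 * ∑ i ∈ Finset.Ioc (0:ℤ) (n:ℤ), i = (n:ℤ) * ((n:ℤ)+1) := by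
  intro n
  induction n with
  | zero => simp
  | succ k ih =>
    have hins : Finset.Ioc (0:ℤ) ((k:ℤ)+1) = insert ((k:ℤ)+1) (Finset.Ioc 0 (k:ℤ)) := by
      ext x
      simp only [Finset.mem_Ioc, Finset.mem_insert]
      omega
    push_cast
    rw [hins, Finset.sum_insert (by simp)]
    ring_nf
    ring_nf at ih
    linarith [ih]

lemma sum_Ioc_id (m : ℤ) (hm : 0 ≤ m) : 2 * ∑ i ∈ Finset.Ioc (0:ℤ) m, i = m * (m+1) := by
  have := sum_Ioc_nat_id m.toNat
  rwa [Int.toNat_of_nonneg hm] at this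

set_option maxHeartbeats 1000000 in
lemma key_bound (p q : ℤ) (hp : 0 < p) (hpq : p < q) (hco : Int.gcd p q = 1) :
    4 * (((Finset.Ioo 0 p ×ˢ Finset.Ioo 0 q).filter
      (fun x : ℤ × ℤ => 2*(x.1*q + x.2*p) < p*q)).card : ℤ)
      ≤ (p-1)*(q-1) - 2*(p/2)*(q/2) := by
  have hq : 0 < q := hp.trans hpq
  have hcop : IsCoprime p q := Int.isCoprime_iff_gcd_eq_one.mpr hco
  set m : ℤ := (p-1)/2 with hm
  have hm0 : 0 ≤ m := by omega
  have hmp : m < p := by omega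
  set col : ℤ → ℕ := fun i => ((Finset.Ioo 0 q).filter (fun j => 2*(i*q + j*p) < p*q)).card
    with hcol
  -- decompose the card fiberwise
  have hfib : ((Finset.Ioo 0 p ×ˢ Finset.Ioo 0 q).filter
      (fun x : ℤ × ℤ => 2*(x.1*q + x.2*p) < p*q)).card = ∑ i ∈ Finset.Ioo 0 p, col i := by
    rw [Finset.card_eq_sum_card_fiberwise (f := Prod.fst) (t := Finset.Ioo 0 p)
      (fun x hx => (Finset.mem_product.mp (Finset.mem_filter.mp hx).1).1)]
    refine Finset.sum_congr rfl (fun i hi => ?_)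
    simp only [hcol]
    apply Finset.card_bij (fun x _ => x.2)
    · rintro ⟨a, b⟩ hx
      simp only [Finset.mem_filter, Finset.mem_product] at hx ⊢
      obtain ⟨⟨⟨h1, h2⟩, h3⟩, h4⟩ := hx
      subst h4
      exact ⟨h2, h3⟩
    · rintro ⟨a, b⟩ hx ⟨c, d⟩ hy hbd
      simp only [Finset.mem_filter] at hx hy
      simp only at hbd
      have ha' : a = i := hx.2
      have hc' : c = i := hy.2
      simp_all
    · intro b hb
      simp only [Finset.mem_filter, Finset.mem_Ioo] at hb
      refine ⟨(i, b), ?_, rfl⟩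
      simp only [Finset.mem_filter, Finset.mem_product, Finset.mem_Ioo]
      rw [Finset.mem_Ioo] at hi
      exact ⟨⟨⟨hi, hb.1⟩, hb.2⟩, trivial⟩
  -- columns beyond m are empty
  have hcol0 : ∀ i ∈ Finset.Ioo 0 p, i ∉ Finset.Ioc 0 m → col i = 0 := by
    intro i hi hni
    rw [Finset.mem_Ioo] at hi
    have h2i : p ≤ 2*i := by
      rw [Finset.mem_Ioc] at hni
      omega
    simp only [hcol, Finset.card_eq_zero, Finset.filter_eq_empty_iff]
    intro j hj
    rw [Finset.mem_Ioo] at hj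
    push_neg
    have l1 : p * q ≤ 2*i*q := by
      have := mul_le_mul_of_nonneg_right h2i hq.le
      linarith
    nlinarith [mul_pos hj.1 hp]
  have hsub : Finset.Ioc 0 m ⊆ Finset.Ioo 0 p := by
    intro i hi
    rw [Finset.mem_Ioc] at hi
    rw [Finset.mem_Ioo]
    omega
  have hsum_eq : ∑ i ∈ Finset.Ioo 0 p, (col i : ℤ) = ∑ i ∈ Finset.Ioc 0 m, (col i : ℤ) := by
    symm
    apply Finset.sum_subset hsub
    intro i hi hni
    rw [hcol0 i hi hni]
    rfl
  -- exact column values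
  have hcolval : ∀ i ∈ Finset.Ioc 0 m, (col i : ℤ) = (p*q - 2*i*q - 1) / (2*p) := by
    intro i hi
    rw [Finset.mem_Ioc] at hi
    have h2i : 2*i + 1 ≤ p := by omega
    set N : ℤ := p*q - 2*i*q - 1 with hN
    have hNpos : 0 ≤ N := by
      have := mul_le_mul_of_nonneg_right (show 2*i ≤ p - 1 by omega) hq.le
      nlinarith
    set c : ℤ := N / (2*p) with hc
    have h2p : (0:ℤ) < 2*p := by omega
    have hc0 : 0 ≤ c := Int.ediv_nonneg hNpos (by omega)
    have hcmul : c * (2*p) ≤ N := Int.ediv_mul_le N (by omega)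
    have hcq : c < q := by
      have l1 : 2*1*q ≤ 2*i*q := by
        have := mul_le_mul_of_nonneg_right (show 2*1 ≤ 2*i by omega) hq.le
        linarith
      have l2 : c * (2*p) < q * (2*p) := by nlinarith [mul_pos hp hq]
      exact lt_of_mul_lt_mul_right l2 (by omega)
    have hset : (Finset.Ioo 0 q).filter (fun j => 2*(i*q + j*p) < p*q) = Finset.Ioc 0 c := by
      ext j
      simp only [Finset.mem_filter, Finset.mem_Ioo, Finset.mem_Ioc]
      constructor
      · rintro ⟨⟨hj0, hjq⟩, hlt⟩
        refine ⟨hj0, ?_⟩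
        rw [hc, Int.le_ediv_iff_mul_le h2p]
        linarith
      · rintro ⟨hj0, hjc⟩
        have hj2 : j * (2*p) ≤ c * (2*p) := mul_le_mul_of_nonneg_right hjc (by omega)
        exact ⟨⟨hj0, by omega⟩, by linarith⟩
    simp only [hcol]
    rw [hset, Int.card_Ioc]
    omega
  -- remainders
  set r : ℤ → ℤ := fun i => (p*q - 2*i*q - 1) % (2*p) with hr
  have hdiv : ∀ i ∈ Finset.Ioc 0 m, 2*p*(col i : ℤ) + r i = p*q - 2*i*q - 1 := by
    intro i hi
    rw [hcolval i hi]
    exact Int.mul_ediv_add_emod _ _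
  have hr0 : ∀ i, 0 ≤ r i := fun i => Int.emod_nonneg _ (by omega)
  have hrlt : ∀ i, r i < 2*p := fun i => Int.emod_lt_of_pos _ (by omega)
  have hrpar : ∀ i, r i % 2 = (p*q - 1) % 2 := by
    intro i
    have h1 : r i % 2 = (p*q - 2*i*q - 1) % 2 := Int.emod_emod_of_dvd _ ⟨p, by ring⟩
    have h2 : (p*q - 2*i*q - 1) % 2 = (p*q - 1) % 2 := by
      have he : p*q - 2*i*q - 1 = (p*q - 1) + 2*(-(i*q)) := by ring
      rw [he]
      generalize p*q - 1 = X
      generalize -(i*q) = Y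
      omega
    rw [h1, h2]
  have hrinj : ∀ x ∈ Finset.Ioc 0 m, ∀ y ∈ Finset.Ioc 0 m, r x = r y → x = y := by
    intro x hx y hy hxy
    rw [Finset.mem_Ioc] at hx hy
    have hmod : (p*q - 2*x*q - 1) ≡ (p*q - 2*y*q - 1) [ZMOD (2*p)] := hxy
    have hdvd : (2*p) ∣ ((p*q - 2*y*q - 1) - (p*q - 2*x*q - 1)) := hmod.dvd
    have hdvd2 : 2*p ∣ 2*(q*(x - y)) := by
      convert hdvd using 1
      ring
    have hpd : p ∣ q*(x-y) := by
      obtain ⟨k, hk⟩ := hdvd2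
      refine ⟨k, ?_⟩
      have h2 : 2*(q*(x-y)) = 2*(p*k) := by rw [hk]; ring
      exact mul_left_cancel₀ two_ne_zero h2
    have hxyd : p ∣ (x - y) := hcop.dvd_of_dvd_mul_left hpd
    by_contra hne
    have habs : 0 < |x - y| := abs_pos.mpr (sub_ne_zero.mpr hne)
    have hle1 : p ≤ |x - y| := Int.le_of_dvd habs ((dvd_abs _ _).mpr hxyd)
    have hlt1 : |x - y| < p := abs_lt.mpr ⟨by omega, by omega⟩
    omega
  -- parity abstraction
  obtain ⟨ε, hε0, hε2, hεr, hεdef⟩ :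
      ∃ ε : ℤ, 0 ≤ ε ∧ ε < 2 ∧ (∀ i, r i % 2 = ε) ∧ ε = (p*q - 1) % 2 :=
    ⟨(p*q-1) % 2, Int.emod_nonneg _ (by norm_num), Int.emod_lt_of_pos _ (by norm_num), hrpar, rfl⟩
  set g : ℤ → ℤ := fun i => (r i - ε) / 2 with hg
  have hgr : ∀ i, r i = 2 * g i + ε := by
    intro i
    have h1 := hεr i
    have h2 := hr0 i
    simp only [hg]
    omega
  have hg0 : ∀ i ∈ Finset.Ioc 0 m, 0 ≤ g i := by
    intro i _
    have h1 := hεr i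
    have h2 := hr0 i
    simp only [hg]
    omega
  have hginj : ∀ x ∈ Finset.Ioc 0 m, ∀ y ∈ Finset.Ioc 0 m, g x = g y → x = y := by
    intro x hx y hy hxy
    apply hrinj x hx y hy
    rw [hgr x, hgr y, hxy]
  have hcardIoc : (((Finset.Ioc (0:ℤ) m).card) : ℤ) = m := by
    rw [Int.card_Ioc]
    omega
  have hgsum := sum_injOn_ge (Finset.Ioc 0 m) g hginj hg0
  rw [hcardIoc] at hgsum
  have hrsum : ∑ i ∈ Finset.Ioc 0 m, r i = 2 * (∑ i ∈ Finset.Ioc 0 m, g i) + m * ε := by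
    rw [show (∑ i ∈ Finset.Ioc (0:ℤ) m, r i) = ∑ i ∈ Finset.Ioc (0:ℤ) m, (2 * g i + ε) from
      Finset.sum_congr rfl (fun i _ => hgr i)]
    rw [Finset.sum_add_distrib, Finset.sum_const, ← Finset.mul_sum, nsmul_eq_mul, hcardIoc]
  have hRge : m*(m-1) + m*ε ≤ ∑ i ∈ Finset.Ioc 0 m, r i := by
    rw [hrsum]
    linarith
  -- sum identities
  have hS1 := sum_Ioc_id m hm0
  have hNsum : ∑ i ∈ Finset.Ioc (0:ℤ) m, (p*q - 2*i*q - 1) = m*(p*q - 1) - q*(m*(m+1)) := by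
    rw [show (∑ i ∈ Finset.Ioc (0:ℤ) m, (p*q - 2*i*q - 1))
        = ∑ i ∈ Finset.Ioc (0:ℤ) m, ((p*q - 1) + (-(2*q))*i) from
      Finset.sum_congr rfl (fun i _ => by ring)]
    rw [Finset.sum_add_distrib, Finset.sum_const, ← Finset.mul_sum, nsmul_eq_mul, hcardIoc]
    linear_combination (-q) * hS1
  have hmain : 2*p*(∑ i ∈ Finset.Ioc 0 m, (col i : ℤ)) + ∑ i ∈ Finset.Ioc 0 m, r i
      = m*(p*q-1) - q*(m*(m+1)) := by
    rw [← hNsum, Finset.mul_sum, ← Finset.sum_add_distrib]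
    exact Finset.sum_congr rfl hdiv
  -- assemble
  have hCA : (((Finset.Ioo 0 p ×ˢ Finset.Ioo 0 q).filter
      (fun x : ℤ × ℤ => 2*(x.1*q + x.2*p) < p*q)).card : ℤ)
      = ∑ i ∈ Finset.Ioc 0 m, (col i : ℤ) := by
    rw [hfib]
    push_cast
    exact hsum_eq
  rw [hCA]
  set S := ∑ i ∈ Finset.Ioc 0 m, (col i : ℤ) with hS
  have h8 : 2*p*(4*S) ≤ 4*(m*(p*q-1) - q*(m*(m+1)) - m*(m-1) - m*ε) := by
    have : 2*p*S = m*(p*q-1) - q*(m*(m+1)) - ∑ i ∈ Finset.Ioc 0 m, r i := by linarith [hmain]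
    linarith [hRge]
  have hfinal : 4*(m*(p*q-1) - q*(m*(m+1)) - m*(m-1) - m*ε)
      ≤ 2*p*((p-1)*(q-1) - 2*(p/2)*(q/2)) := by
    set a := p/2 with hA
    set b := q/2 with hB
    have hpab : p = 2*a ∨ p = 2*a + 1 := by omega
    have hqab : q = 2*b ∨ q = 2*b + 1 := by omega
    have ha0 : 0 ≤ a := by omega
    have hb0 : 0 ≤ b := by omega
    have hnotboth : ¬(p = 2*a ∧ q = 2*b) := by
      rintro ⟨h1, h2⟩
      have d1 : (2:ℤ).natAbs ∣ p.natAbs := Int.natAbs_dvd_natAbs.mpr ⟨a, h1⟩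
      have d2 : (2:ℤ).natAbs ∣ q.natAbs := Int.natAbs_dvd_natAbs.mpr ⟨b, h2⟩
      have : 2 ∣ Int.gcd p q := Nat.dvd_gcd d1 d2
      rw [hco] at this
      omega
    rcases hpab with hpe | hpo
    · have hqo : q = 2*b + 1 := by
        rcases hqab with h | h
        · exact absurd ⟨hpe, h⟩ hnotboth
        · exact h
      have hε1 : ε = 1 := by
        obtain ⟨X, hX⟩ : ∃ X, p*q = 2*X := ⟨a*q, by rw [hpe]; ring⟩
        rw [hεdef, hX]
        omega
      have hma : m = a - 1 := by omega
      rw [hε1, hma, hpe, hqo]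
      nlinarith [mul_nonneg ha0 hb0]
    · rcases hqab with hqe | hqo
      · have hε1 : ε = 1 := by
          obtain ⟨X, hX⟩ : ∃ X, p*q = 2*X := ⟨p*b, by rw [hqe]; ring⟩
          rw [hεdef, hX]
          omega
        have hma : m = a := by omega
        have hab : a < b := by omega
        rw [hε1, hma, hpo, hqe]
        nlinarith [mul_nonneg ha0 (by omega : (0:ℤ) ≤ b - a)]
      · have hε0 : ε = 0 := by
          obtain ⟨X, hX⟩ : ∃ X, p*q - 1 = 2*X := ⟨2*a*b + a + b, by rw [hpo, hqo]; ring⟩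
          rw [hεdef, hX]
          omega
        have hma : m = a := by omega
        rw [hε0, hma, hpo, hqo]
        nlinarith [mul_nonneg ha0 hb0]
  have hchain := h8.trans hfinal
  exact le_of_mul_le_mul_left hchain (by omega : (0:ℤ) < 2*p)


/-- Corollary 2.2: `σ(p,q) ≤ -2⌊p/2⌋⌊q/2⌋` for coprime `0 < p < q`. -/
theorem torusSigma_le (p q : ℤ) (hp : 0 < p) (hpq : p < q) (hco : Int.gcd p q = 1) :
    torusSigma p q ≤ -2 * (p / 2) * (q / 2) := by
  have hq : 0 < q := hp.trans hpq
  have hcop : IsCoprime p q := Int.isCoprime_iff_gcd_eq_one.mpr hco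
  have hpq0 : (0:ℤ) < p*q := mul_pos hp hq
  have hpQ : (0:ℚ) < (p:ℚ) := by exact_mod_cast hp
  have hqQ : (0:ℚ) < (q:ℚ) := by exact_mod_cast hq
  have hpqQ : (0:ℚ) < (p:ℚ) * (q:ℚ) := mul_pos hpQ hqQ
  -- facts about points in the box
  have hbox : ∀ x : ℤ × ℤ, x ∈ Finset.Ioo 0 p ×ˢ Finset.Ioo 0 q →
      (0 < x.1*q + x.2*p ∧ x.1*q + x.2*p < 2*(p*q) ∧
       2*(x.1*q + x.2*p) ≠ p*q ∧ 2*(x.1*q + x.2*p) ≠ 3*(p*q)) := by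
    rintro ⟨i, j⟩ hx
    simp only [Finset.mem_product, Finset.mem_Ioo] at hx
    obtain ⟨⟨hi0, hip⟩, hj0, hjq⟩ := hx
    simp only
    have e1 : 1*q ≤ i*q := mul_le_mul_of_nonneg_right (by omega) hq.le
    have e2 : 1*p ≤ j*p := mul_le_mul_of_nonneg_right (by omega) hp.le
    have e3 : i*q ≤ (p-1)*q := mul_le_mul_of_nonneg_right (by omega) hq.le
    have e4 : j*p ≤ (q-1)*p := mul_le_mul_of_nonneg_right (by omega) hp.le
    refine ⟨by nlinarith, by nlinarith, ?_, ?_⟩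
    · -- 2u ≠ pq
      intro heq
      have hdp : p ∣ (2*i)*q := ⟨q - 2*j, by linear_combination heq⟩
      have h2i : p ∣ 2*i := hcop.dvd_of_dvd_mul_right hdp
      have hdq : q ∣ (2*j)*p := ⟨p - 2*i, by linear_combination heq⟩
      have h2j : q ∣ 2*j := hcop.symm.dvd_of_dvd_mul_right hdq
      obtain ⟨k, hk⟩ := h2i
      obtain ⟨l, hl⟩ := h2j
      have hk1 : k = 1 := by
        rcases le_or_gt k 0 with h | h
        · have := mul_nonpos_of_nonneg_of_nonpos hp.le h
          omega
        · rcases le_or_gt 2 k with h2 | h2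
          · have := mul_le_mul_of_nonneg_left h2 hp.le
            omega
          · omega
      have hl1 : l = 1 := by
        rcases le_or_gt l 0 with h | h
        · have := mul_nonpos_of_nonneg_of_nonpos hq.le h
          omega
        · rcases le_or_gt 2 l with h2 | h2
          · have := mul_le_mul_of_nonneg_left h2 hq.le
            omega
          · omega
      rw [hk1, mul_one] at hk
      rw [hl1, mul_one] at hl
      have : p * q = 0 := by linear_combination heq - q*hk - p*hl
      nlinarith
    · -- 2u ≠ 3pq
      intro heq
      have hdp : p ∣ (2*i)*q := ⟨3*q - 2*j, by linear_combination heq⟩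
      have h2i : p ∣ 2*i := hcop.dvd_of_dvd_mul_right hdp
      have hdq : q ∣ (2*j)*p := ⟨3*p - 2*i, by linear_combination heq⟩
      have h2j : q ∣ 2*j := hcop.symm.dvd_of_dvd_mul_right hdq
      obtain ⟨k, hk⟩ := h2i
      obtain ⟨l, hl⟩ := h2j
      have hk1 : k = 1 := by
        rcases le_or_gt k 0 with h | h
        · have := mul_nonpos_of_nonneg_of_nonpos hp.le h
          omega
        · rcases le_or_gt 2 k with h2 | h2
          · have := mul_le_mul_of_nonneg_left h2 hp.le
            omega
          · omega
      have hl1 : l = 1 := by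
        rcases le_or_gt l 0 with h | h
        · have := mul_nonpos_of_nonneg_of_nonpos hq.le h
          omega
        · rcases le_or_gt 2 l with h2 | h2
          · have := mul_le_mul_of_nonneg_left h2 hq.le
            omega
          · omega
      rw [hk1, mul_one] at hk
      rw [hl1, mul_one] at hl
      have : p * q = 0 := by linear_combination q*hk + p*hl - heq
      nlinarith
  -- the rational sum rewritten
  have hsval : ∀ x : ℤ × ℤ, x ∈ Finset.Ioo 0 p ×ˢ Finset.Ioo 0 q →
      (x.1 : ℚ) / (p : ℚ) + (x.2 : ℚ) / (q : ℚ)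
        = ((x.1*q + x.2*p : ℤ) : ℚ) / ((p:ℚ) * (q:ℚ)) := by
    rintro ⟨i, j⟩ _
    simp only
    field_simp
    push_cast
    ring
  -- comparison transfers
  have hcmp : ∀ (u : ℤ) (a b : ℤ), 0 < b →
      ((u:ℚ) / ((p:ℚ)*(q:ℚ)) < (a:ℚ)/(b:ℚ) ↔ u*b < a*(p*q)) := by
    intro u a b hb
    rw [div_lt_div_iff₀ hpqQ (by exact_mod_cast hb)]
    constructor
    · intro h
      have : ((u*b : ℤ) : ℚ) < ((a*(p*q) : ℤ) : ℚ) := by push_cast; push_cast at h; linarith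
      exact_mod_cast this
    · intro h
      have : ((u*b : ℤ) : ℚ) < ((a*(p*q) : ℤ) : ℚ) := by exact_mod_cast h
      push_cast at this; push_cast; linarith
  have hcmp' : ∀ (u : ℤ) (a b : ℤ), 0 < b →
      ((a:ℚ)/(b:ℚ) < (u:ℚ) / ((p:ℚ)*(q:ℚ)) ↔ a*(p*q) < u*b) := by
    intro u a b hb
    rw [div_lt_div_iff₀ (by exact_mod_cast hb) hpqQ]
    constructor
    · intro h
      have : ((a*(p*q) : ℤ) : ℚ) < ((u*b : ℤ) : ℚ) := by push_cast; push_cast at h; linarith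
      exact_mod_cast this
    · intro h
      have : ((a*(p*q) : ℤ) : ℚ) < ((u*b : ℤ) : ℚ) := by exact_mod_cast h
      push_cast at this; push_cast; linarith
  -- now rewrite the two sigmas with integer predicates
  set box := Finset.Ioo 0 p ×ˢ Finset.Ioo 0 q with hbox'
  have hset1 : (box.filter (fun x : ℤ × ℤ =>
      (0 < (x.1 : ℚ) / (p : ℚ) + (x.2 : ℚ) / (q : ℚ) ∧
        (x.1 : ℚ) / (p : ℚ) + (x.2 : ℚ) / (q : ℚ) < 1 / 2) ∨
      (3 / 2 < (x.1 : ℚ) / (p : ℚ) + (x.2 : ℚ) / (q : ℚ) ∧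
        (x.1 : ℚ) / (p : ℚ) + (x.2 : ℚ) / (q : ℚ) < 2)))
      = box.filter (fun x : ℤ × ℤ =>
        2*(x.1*q + x.2*p) < p*q ∨ 3*(p*q) < 2*(x.1*q + x.2*p)) := by
    apply Finset.filter_congr
    intro x hx
    obtain ⟨hu0, hu2, hne1, hne3⟩ := hbox x hx
    rw [hsval x hx]
    push_cast
    have c1 := hcmp (x.1*q + x.2*p) 1 2 (by norm_num)
    have c2 := hcmp' (x.1*q + x.2*p) 3 2 (by norm_num)
    have c3 := hcmp' (x.1*q + x.2*p) 0 1 (by norm_num)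
    have c4 := hcmp (x.1*q + x.2*p) 2 1 (by norm_num)
    push_cast at c1 c2 c3 c4
    norm_num at c3 c4
    rw [c1, c2, c3, c4]
    constructor
    · rintro (⟨_, h⟩ | ⟨h, _⟩)
      · exact Or.inl (by linarith)
      · exact Or.inr (by linarith)
    · rintro (h | h)
      · exact Or.inl ⟨by linarith, by linarith⟩
      · exact Or.inr ⟨by linarith, by linarith⟩
  have hset2 : (box.filter (fun x : ℤ × ℤ =>
      1 / 2 < (x.1 : ℚ) / (p : ℚ) + (x.2 : ℚ) / (q : ℚ) ∧
        (x.1 : ℚ) / (p : ℚ) + (x.2 : ℚ) / (q : ℚ) < 3 / 2))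
      = box.filter (fun x : ℤ × ℤ =>
        ¬(2*(x.1*q + x.2*p) < p*q ∨ 3*(p*q) < 2*(x.1*q + x.2*p))) := by
    apply Finset.filter_congr
    intro x hx
    obtain ⟨hu0, hu2, hne1, hne3⟩ := hbox x hx
    rw [hsval x hx]
    push_cast
    have c5 := hcmp' (x.1*q + x.2*p) 1 2 (by norm_num)
    have c6 := hcmp (x.1*q + x.2*p) 3 2 (by norm_num)
    push_cast at c5 c6
    rw [c5, c6]
    constructor
    · rintro ⟨h1, h2⟩
      push_neg
      exact ⟨by linarith, by linarith⟩
    · intro h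
      push_neg at h
      obtain ⟨h1, h2⟩ := h
      constructor
      · rcases lt_or_eq_of_le h1 with h | h
        · linarith
        · exact absurd h.symm hne1
      · rcases lt_or_eq_of_le h2 with h | h
        · linarith
        · exact absurd h hne3
  have hplus : sigmaPlus p q = (((box.filter (fun x : ℤ × ℤ =>
      2*(x.1*q + x.2*p) < p*q ∨ 3*(p*q) < 2*(x.1*q + x.2*p))).card : ℕ) : ℤ) := by
    unfold sigmaPlus
    rw [← hbox', hset1]
  have hminus : sigmaMinus p q = (((box.filter (fun x : ℤ × ℤ =>
      ¬(2*(x.1*q + x.2*p) < p*q ∨ 3*(p*q) < 2*(x.1*q + x.2*p)))).card : ℕ) : ℤ) := by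
    unfold sigmaMinus
    rw [← hbox', hset2]
  -- split the plus-card
  have hsplit : (box.filter (fun x : ℤ × ℤ =>
      2*(x.1*q + x.2*p) < p*q ∨ 3*(p*q) < 2*(x.1*q + x.2*p))).card
      = (box.filter (fun x : ℤ × ℤ => 2*(x.1*q + x.2*p) < p*q)).card
        + (box.filter (fun x : ℤ × ℤ => 3*(p*q) < 2*(x.1*q + x.2*p))).card := by
    rw [Finset.filter_or]
    apply Finset.card_union_of_disjoint
    rw [Finset.disjoint_left]
    intro x h1 h2
    rw [Finset.mem_filter] at h1 h2
    have := h1.2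
    have := h2.2
    linarith
  have hsym : (box.filter (fun x : ℤ × ℤ => 3*(p*q) < 2*(x.1*q + x.2*p))).card
      = (box.filter (fun x : ℤ × ℤ => 2*(x.1*q + x.2*p) < p*q)).card := by
    rw [hbox']
    apply Finset.card_bij' (fun x _ => (p - x.1, q - x.2)) (fun x _ => (p - x.1, q - x.2))
    · rintro ⟨a, b⟩ ha
      simp only [Finset.mem_filter, Finset.mem_product, Finset.mem_Ioo] at ha ⊢
      obtain ⟨⟨⟨h1, h2⟩, h3, h4⟩, h5⟩ := ha
      exact ⟨⟨⟨by omega, by omega⟩, by omega, by omega⟩, by nlinarith⟩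
    · rintro ⟨a, b⟩ ha
      simp only [Finset.mem_filter, Finset.mem_product, Finset.mem_Ioo] at ha ⊢
      obtain ⟨⟨⟨h1, h2⟩, h3, h4⟩, h5⟩ := ha
      exact ⟨⟨⟨by omega, by omega⟩, by omega, by omega⟩, by nlinarith⟩
    · rintro ⟨a, b⟩ _
      simp
    · rintro ⟨a, b⟩ _
      simp
  have hcount := Finset.card_filter_add_card_filter_not
    (s := box) (p := fun x : ℤ × ℤ =>
      2*(x.1*q + x.2*p) < p*q ∨ 3*(p*q) < 2*(x.1*q + x.2*p))
  have hboxcard : ((box.card : ℕ) : ℤ) = (p-1)*(q-1) := by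
    rw [hbox', Finset.card_product, Int.card_Ioo, Int.card_Ioo]
    have t1 : ((p - 0 - 1).toNat : ℤ) = p - 1 := by omega
    have t2 : ((q - 0 - 1).toNat : ℤ) = q - 1 := by omega
    push_cast
    rw [t1, t2]
  have key := key_bound p q hp hpq hco
  rw [← hbox'] at key
  unfold torusSigma
  rw [hplus, hminus]
  have hcount' : (((box.filter (fun x : ℤ × ℤ =>
      2*(x.1*q + x.2*p) < p*q ∨ 3*(p*q) < 2*(x.1*q + x.2*p))).card : ℕ) : ℤ)
      + (((box.filter (fun x : ℤ × ℤ =>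
      ¬(2*(x.1*q + x.2*p) < p*q ∨ 3*(p*q) < 2*(x.1*q + x.2*p)))).card : ℕ) : ℤ)
      = (p-1)*(q-1) := by
    rw [← hboxcard]
    exact_mod_cast hcount
  have hsplit' : (((box.filter (fun x : ℤ × ℤ =>
      2*(x.1*q + x.2*p) < p*q ∨ 3*(p*q) < 2*(x.1*q + x.2*p))).card : ℕ) : ℤ)
      = 2 * (((box.filter (fun x : ℤ × ℤ => 2*(x.1*q + x.2*p) < p*q)).card : ℕ) : ℤ) := by
    rw [hsplit, hsym]
    push_cast
    ring
  linarith [key, hcount', hsplit']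
end

section
/- Let p > 0 be an odd integer, let r be an even integer with 2 ≤ r < p, and suppose gcd(p, p+r) = 1. Then σ(p, p+r) = −(p−1)(p+r+1)/2 + 2·Σ_{i=1}^{r/2} ( ⌊(2i−1)p/(2r)⌋ − ⌊((2i−1)p+r)/(2r)⌋ ). -/
open Finset

-- floor of int division
lemma floor_int_div (a b : ℤ) (hb : 0 < b) : ⌊(a:ℚ)/(b:ℚ)⌋ = a / b := by
  lift b to ℕ using hb.le
  exact_mod_cast Rat.floor_intCast_div_natCast a b

-- card of product filter fiberwise over fst
lemma card_filter_prod_fst (s t : Finset ℤ) (P : ℤ → ℤ → Prop) [∀ a b, Decidable (P a b)] :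
    ((s ×ˢ t).filter fun x => P x.1 x.2).card = ∑ a ∈ s, (t.filter (P a)).card := by
  rw [Finset.card_eq_sum_card_fiberwise (f := Prod.fst) (t := s)
    (fun x hx => (Finset.mem_product.mp (Finset.mem_filter.mp hx).1).1)]
  refine Finset.sum_congr rfl fun a ha => ?_
  refine Finset.card_nbij' Prod.snd (fun b => (a, b)) ?_ ?_ ?_ ?_
  · intro x hx
    simp only [Finset.mem_coe, Finset.mem_filter, Finset.mem_product] at hx ⊢
    obtain ⟨⟨⟨_, h2⟩, h3⟩, h4⟩ := hx
    subst h4; exact ⟨h2, h3⟩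
  · intro b hb
    simp only [Finset.mem_coe, Finset.mem_filter, Finset.mem_product] at hb ⊢
    exact ⟨⟨⟨ha, hb.1⟩, hb.2⟩, trivial⟩
  · intro x hx
    simp only [Finset.mem_coe, Finset.mem_filter] at hx
    rw [← hx.2]
  · intro b _; rfl

lemma card_filter_prod_snd (s t : Finset ℤ) (P : ℤ → ℤ → Prop) [∀ a b, Decidable (P a b)] :
    ((s ×ˢ t).filter fun x => P x.1 x.2).card = ∑ b ∈ t, (s.filter (fun a => P a b)).card := by
  rw [Finset.card_eq_sum_card_fiberwise (f := Prod.snd) (t := t)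
    (fun x hx => (Finset.mem_product.mp (Finset.mem_filter.mp hx).1).2)]
  refine Finset.sum_congr rfl fun b hb => ?_
  refine Finset.card_nbij' Prod.fst (fun a => (a, b)) ?_ ?_ ?_ ?_
  · intro x hx
    simp only [Finset.mem_coe, Finset.mem_filter, Finset.mem_product] at hx ⊢
    obtain ⟨⟨⟨h1, _⟩, h3⟩, h4⟩ := hx
    subst h4; exact ⟨h1, h3⟩
  · intro a ha
    simp only [Finset.mem_coe, Finset.mem_filter, Finset.mem_product] at ha ⊢
    exact ⟨⟨⟨ha.1, hb⟩, ha.2⟩, trivial⟩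
  · intro x hx
    simp only [Finset.mem_coe, Finset.mem_filter] at hx
    rw [← hx.2]
  · intro a _; rfl

section ratiffs
variable {B D : ℤ}

lemma cast_lt_iff (a b : ℤ) : (a:ℚ) < b ↔ a < b := Int.cast_lt

lemma aux_pos (hD : 0 < D) : (0:ℚ) < (B:ℚ)/(D:ℚ) ↔ 0 < B := by
  rw [lt_div_iff₀ (by exact_mod_cast hD : (0:ℚ) < (D:ℚ))]
  simp

lemma aux_half (hD : 0 < D) : (B:ℚ)/(D:ℚ) < 1/2 ↔ 2*B < D := by
  rw [div_lt_div_iff₀ (by exact_mod_cast hD : (0:ℚ) < (D:ℚ)) (by norm_num : (0:ℚ) < 2),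
    ← cast_lt_iff (2*B) D]
  push_cast
  constructor <;> intro h <;> linarith

lemma aux_32lt (hD : 0 < D) : (3/2:ℚ) < (B:ℚ)/(D:ℚ) ↔ 3*D < 2*B := by
  rw [div_lt_div_iff₀ (by norm_num : (0:ℚ) < 2) (by exact_mod_cast hD : (0:ℚ) < (D:ℚ)),
    ← cast_lt_iff (3*D) (2*B)]
  push_cast
  constructor <;> intro h <;> linarith

lemma aux_lt2 (hD : 0 < D) : (B:ℚ)/(D:ℚ) < 2 ↔ B < 2*D := by
  rw [div_lt_iff₀ (by exact_mod_cast hD : (0:ℚ) < (D:ℚ)), ← cast_lt_iff B (2*D)]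
  push_cast
  constructor <;> intro h <;> linarith

lemma aux_halflt (hD : 0 < D) : (1/2:ℚ) < (B:ℚ)/(D:ℚ) ↔ D < 2*B := by
  rw [div_lt_div_iff₀ (by norm_num : (0:ℚ) < 2) (by exact_mod_cast hD : (0:ℚ) < (D:ℚ)),
    ← cast_lt_iff D (2*B)]
  push_cast
  constructor <;> intro h <;> linarith

lemma aux_lt32 (hD : 0 < D) : (B:ℚ)/(D:ℚ) < 3/2 ↔ 2*B < 3*D := by
  rw [div_lt_div_iff₀ (by exact_mod_cast hD : (0:ℚ) < (D:ℚ)) (by norm_num : (0:ℚ) < 2),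
    ← cast_lt_iff (2*B) (3*D)]
  push_cast
  constructor <;> intro h <;> linarith

end ratiffs

lemma sum_div_eq (p q i j : ℤ) (hp : 0 < p) (hq : 0 < q) :
    (i:ℚ)/(p:ℚ) + (j:ℚ)/(q:ℚ) = ((i*q + j*p : ℤ):ℚ)/((p*q : ℤ):ℚ) := by
  have hp' : (p:ℚ) ≠ 0 := by exact_mod_cast hp.ne'
  have hq' : (q:ℚ) ≠ 0 := by exact_mod_cast hq.ne'
  push_cast
  field_simp

section main
variable (p q : ℤ)

-- basic facts about members of the product
lemma memB {p q : ℤ} (hp : 0 < p) (hq : 0 < q) {x : ℤ × ℤ}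
    (hx : x ∈ Finset.Ioo 0 p ×ˢ Finset.Ioo 0 q) :
    0 < x.1*q + x.2*p ∧ x.1*q + x.2*p < 2*(p*q) := by
  rw [Finset.mem_product, Finset.mem_Ioo, Finset.mem_Ioo] at hx
  obtain ⟨⟨h1, h2⟩, h3, h4⟩ := hx
  constructor
  · have : 1*q ≤ x.1*q := mul_le_mul_of_nonneg_right h1 hq.le
    have : 1*p ≤ x.2*p := mul_le_mul_of_nonneg_right h3 hp.le
    nlinarith
  · have h2' : x.1 ≤ p - 1 := by omega
    have h4' : x.2 ≤ q - 1 := by omega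
    have e1 : x.1*q ≤ (p-1)*q := mul_le_mul_of_nonneg_right h2' hq.le
    have e2 : x.2*p ≤ (q-1)*p := mul_le_mul_of_nonneg_right h4' hp.le
    nlinarith

-- the rational condition for sigmaPlus, in integer form (within the product)
lemma plus_cond_iff {p q : ℤ} (hp : 0 < p) (hq : 0 < q) {x : ℤ × ℤ}
    (hx : x ∈ Finset.Ioo 0 p ×ˢ Finset.Ioo 0 q) :
    ((0 < (x.1 : ℚ) / (p : ℚ) + (x.2 : ℚ) / (q : ℚ) ∧
      (x.1 : ℚ) / (p : ℚ) + (x.2 : ℚ) / (q : ℚ) < 1 / 2) ∨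
    (3 / 2 < (x.1 : ℚ) / (p : ℚ) + (x.2 : ℚ) / (q : ℚ) ∧
      (x.1 : ℚ) / (p : ℚ) + (x.2 : ℚ) / (q : ℚ) < 2)) ↔
    (2*(x.1*q + x.2*p) < p*q ∨ 3*(p*q) < 2*(x.1*q + x.2*p)) := by
  have hpq : 0 < p*q := mul_pos hp hq
  obtain ⟨hB1, hB2⟩ := memB hp hq hx
  rw [sum_div_eq p q x.1 x.2 hp hq, aux_pos hpq, aux_half hpq, aux_32lt hpq, aux_lt2 hpq]
  constructor
  · rintro (⟨_, h⟩ | ⟨h, _⟩)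
    · exact Or.inl h
    · exact Or.inr h
  · rintro (h | h)
    · exact Or.inl ⟨hB1, h⟩
    · exact Or.inr ⟨h, hB2⟩

lemma minus_cond_iff {p q : ℤ} (hp : 0 < p) (hq : 0 < q) {x : ℤ × ℤ} :
    ((1:ℚ) / 2 < (x.1 : ℚ) / (p : ℚ) + (x.2 : ℚ) / (q : ℚ) ∧
      (x.1 : ℚ) / (p : ℚ) + (x.2 : ℚ) / (q : ℚ) < 3 / 2) ↔
    (p*q < 2*(x.1*q + x.2*p) ∧ 2*(x.1*q + x.2*p) < 3*(p*q)) := by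
  have hpq : 0 < p*q := mul_pos hp hq
  rw [sum_div_eq p q x.1 x.2 hp hq, aux_halflt hpq, aux_lt32 hpq]

lemma sigma_sum (hp : 0 < p) (hq : 0 < q) (hop : Odd p) (hoq : Odd q) :
    sigmaPlus p q + sigmaMinus p q = (p-1)*(q-1) := by
  unfold sigmaPlus sigmaMinus
  have hfilter :
      (Finset.Ioo 0 p ×ˢ Finset.Ioo 0 q).filter (fun x =>
        (0 < (x.1 : ℚ) / (p : ℚ) + (x.2 : ℚ) / (q : ℚ) ∧
          (x.1 : ℚ) / (p : ℚ) + (x.2 : ℚ) / (q : ℚ) < 1 / 2) ∨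
        (3 / 2 < (x.1 : ℚ) / (p : ℚ) + (x.2 : ℚ) / (q : ℚ) ∧
          (x.1 : ℚ) / (p : ℚ) + (x.2 : ℚ) / (q : ℚ) < 2)) =
      (Finset.Ioo 0 p ×ˢ Finset.Ioo 0 q).filter (fun x =>
        ¬ (1 / 2 < (x.1 : ℚ) / (p : ℚ) + (x.2 : ℚ) / (q : ℚ) ∧
          (x.1 : ℚ) / (p : ℚ) + (x.2 : ℚ) / (q : ℚ) < 3 / 2)) := by
    apply Finset.filter_congr
    intro x hx
    obtain ⟨hB1, hB2⟩ := memB hp hq hx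
    obtain ⟨c, hc⟩ := hop.mul hoq
    rw [plus_cond_iff hp hq hx, minus_cond_iff hp hq]
    generalize x.1*q + x.2*p = B at hB1 hB2 ⊢
    generalize p*q = P at hc hB1 hB2 ⊢
    omega
  rw [hfilter]
  have := Finset.card_filter_add_card_filter_not
    (s := Finset.Ioo 0 p ×ˢ Finset.Ioo 0 q)
    (p := fun x => (1:ℚ) / 2 < (x.1 : ℚ) / (p : ℚ) + (x.2 : ℚ) / (q : ℚ) ∧
      (x.1 : ℚ) / (p : ℚ) + (x.2 : ℚ) / (q : ℚ) < 3 / 2)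
  have hcard : ((Finset.Ioo 0 p ×ˢ Finset.Ioo 0 q).card : ℤ) = (p-1)*(q-1) := by
    rw [Finset.card_product, Int.card_Ioo, Int.card_Ioo]
    push_cast [Int.toNat_of_nonneg (by omega : (0:ℤ) ≤ p - 0 - 1),
      Int.toNat_of_nonneg (by omega : (0:ℤ) ≤ q - 0 - 1)]
    ring
  rw [← hcard, ← this]
  omega

lemma sigmaPlus_eq_two_mul (hp : 0 < p) (hq : 0 < q) :
    sigmaPlus p q =
      2 * (((Finset.Ioo 0 p ×ˢ Finset.Ioo 0 q).filter
        (fun x => 2*(x.1*q + x.2*p) < p*q)).card : ℤ) := by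
  unfold sigmaPlus
  have hfilter :
      (Finset.Ioo 0 p ×ˢ Finset.Ioo 0 q).filter (fun x =>
        (0 < (x.1 : ℚ) / (p : ℚ) + (x.2 : ℚ) / (q : ℚ) ∧
          (x.1 : ℚ) / (p : ℚ) + (x.2 : ℚ) / (q : ℚ) < 1 / 2) ∨
        (3 / 2 < (x.1 : ℚ) / (p : ℚ) + (x.2 : ℚ) / (q : ℚ) ∧
          (x.1 : ℚ) / (p : ℚ) + (x.2 : ℚ) / (q : ℚ) < 2)) =
      (Finset.Ioo 0 p ×ˢ Finset.Ioo 0 q).filter (fun x =>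
        2*(x.1*q + x.2*p) < p*q ∨ 3*(p*q) < 2*(x.1*q + x.2*p)) := by
    apply Finset.filter_congr
    intro x hx
    rw [plus_cond_iff hp hq hx]
  rw [hfilter, Finset.filter_or, Finset.card_union_of_disjoint]
  · have hbij : ((Finset.Ioo 0 p ×ˢ Finset.Ioo 0 q).filter
        (fun x => 3*(p*q) < 2*(x.1*q + x.2*p))).card =
        ((Finset.Ioo 0 p ×ˢ Finset.Ioo 0 q).filter
        (fun x => 2*(x.1*q + x.2*p) < p*q)).card := by
      apply Finset.card_nbij' (fun x => (p - x.1, q - x.2)) (fun x => (p - x.1, q - x.2))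
      · intro x hx
        simp only [Finset.mem_coe, Finset.mem_filter, Finset.mem_product, Finset.mem_Ioo] at hx ⊢
        obtain ⟨⟨⟨a1, a2⟩, a3, a4⟩, h⟩ := hx
        refine ⟨⟨⟨by omega, by omega⟩, by omega, by omega⟩, by nlinarith⟩
      · intro x hx
        simp only [Finset.mem_coe, Finset.mem_filter, Finset.mem_product, Finset.mem_Ioo] at hx ⊢
        obtain ⟨⟨⟨a1, a2⟩, a3, a4⟩, h⟩ := hx
        refine ⟨⟨⟨by omega, by omega⟩, by omega, by omega⟩, by nlinarith⟩
      · intro x _; simp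
      · intro x _; simp
    push_cast [hbij]
    ring
  · rw [Finset.disjoint_filter]
    intro x _ h1 h2
    nlinarith [mul_pos hp hq]

lemma row_eq {p q : ℤ} (i : ℤ) (hp : 0 < p) (hq : 0 < q) (hop : Odd p) (hoq : Odd q)
    (hi1 : 0 < i) (hi2 : i < p) :
    (Finset.Ioo 0 q).filter (fun j => 2*(i*q + j*p) < p*q) =
      Finset.Icc 1 ((q*(p-2*i))/(2*p)) := by
  have h2p : (0:ℤ) < 2*p := by linarith
  ext j
  simp only [Finset.mem_filter, Finset.mem_Ioo, Finset.mem_Icc]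
  set X := q*(p-2*i) with hX
  have hc : X = 2*p*(X/(2*p)) + X % (2*p) := (Int.mul_ediv_add_emod X (2*p)).symm
  have hm0 : 0 ≤ X % (2*p) := Int.emod_nonneg X h2p.ne'
  have hm1 : X % (2*p) < 2*p := Int.emod_lt_of_pos X h2p
  have hXodd : Odd X := hoq.mul (hop.sub_even (even_two_mul i))
  have hXle : X ≤ q*(p-2) := mul_le_mul_of_nonneg_left (by omega) hq.le
  have hXeq : X = p*q - 2*(i*q) := by rw [hX]; ring
  set c := X/(2*p) with hcdef
  constructor
  · rintro ⟨⟨hj0, hjq⟩, hlt⟩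
    have h1 : 2*p*j < X := by linarith
    refine ⟨by omega, ?_⟩
    by_contra hcon
    push_neg at hcon
    have h5 : 2*p*(c+1) ≤ 2*p*j := mul_le_mul_of_nonneg_left (by omega) h2p.le
    have e : 2*p*(c+1) = 2*p*c + 2*p := by ring
    linarith
  · rintro ⟨hj1, hjc⟩
    have h2 : 2*p*j ≤ 2*p*c := mul_le_mul_of_nonneg_left hjc h2p.le
    have hne : 2*p*j ≠ X := by
      intro h
      exact (Int.not_odd_iff_even.mpr ⟨p*j, by ring⟩) (h ▸ hXodd)
    have h3 : 2*p*j < X := lt_of_le_of_ne (by linarith) hne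
    have hX2pq : X < 2*p*q := by nlinarith
    refine ⟨⟨by omega, ?_⟩, by linarith⟩
    have h4 : 2*p*j < 2*p*q := lt_trans h3 hX2pq
    exact lt_of_mul_lt_mul_left h4 h2p.le

lemma low_eq_sum (m : ℤ) (hp : 0 < p) (hq : 0 < q) (hop : Odd p) (hoq : Odd q)
    (hm : p = 2*m + 1) (hm1 : 1 ≤ m) :
    (((Finset.Ioo 0 p ×ˢ Finset.Ioo 0 q).filter
        (fun x => 2*(x.1*q + x.2*p) < p*q)).card : ℤ) =
      ∑ i ∈ Finset.Icc 1 m, (q*(p-2*i))/(2*p) := by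
  have h2p : (0:ℤ) < 2*p := by linarith
  have step1 : ∀ i ∈ Finset.Ioo (0:ℤ) p,
      (((Finset.Ioo 0 q).filter (fun j => 2*(i*q + j*p) < p*q)).card : ℤ) =
        max ((q*(p-2*i))/(2*p)) 0 := by
    intro i hi
    rw [Finset.mem_Ioo] at hi
    rw [row_eq i hp hq hop hoq hi.1 hi.2, Int.card_Icc]
    have e : (q*(p-2*i))/(2*p) + 1 - 1 = (q*(p-2*i))/(2*p) := by ring
    rw [e, Int.toNat_eq_max]
  have hfib := card_filter_prod_fst (Finset.Ioo 0 p) (Finset.Ioo 0 q)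
    (fun a b => 2*(a*q + b*p) < p*q)
  beta_reduce at hfib
  rw [hfib]
  push_cast
  rw [Finset.sum_congr rfl step1]
  have hsub : Finset.Icc 1 m ⊆ Finset.Ioo 0 p := by
    intro i hi
    simp only [Finset.mem_Icc] at hi
    simp only [Finset.mem_Ioo]
    omega
  rw [← Finset.sum_subset hsub]
  · apply Finset.sum_congr rfl
    intro i hi
    rw [Finset.mem_Icc] at hi
    have hX : 0 ≤ q*(p-2*i) := mul_nonneg hq.le (by omega)
    exact max_eq_left (Int.ediv_nonneg hX h2p.le)
  · intro i hi hni
    simp only [Finset.mem_Ioo] at hi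
    simp only [Finset.mem_Icc] at hni
    have hX : q*(p-2*i) < 0 := mul_neg_of_pos_of_neg hq (by omega)
    exact max_eq_right (Int.ediv_neg_of_neg_of_pos hX h2p).le

lemma gauss_sum_nat (k : ℕ) :
    2 * ∑ t ∈ Finset.Icc (1:ℤ) (k:ℤ), (t-1) = (k:ℤ)*((k:ℤ)-1) := by
  induction k with
  | zero => simp
  | succ n ih =>
    have hins : Finset.Icc (1:ℤ) ((n+1:ℕ):ℤ) = insert ((n:ℤ)+1) (Finset.Icc 1 (n:ℤ)) := by
      ext x
      simp only [Finset.mem_Icc, Finset.mem_insert]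
      push_cast
      omega
    have hnot : ((n:ℤ)+1) ∉ Finset.Icc (1:ℤ) (n:ℤ) := by
      simp only [Finset.mem_Icc]
      omega
    rw [hins, Finset.sum_insert hnot]
    push_cast
    ring_nf
    ring_nf at ih
    linarith

lemma gauss_sum (m : ℤ) (hm : 0 ≤ m) :
    2 * ∑ t ∈ Finset.Icc (1:ℤ) m, (t-1) = m*(m-1) := by
  obtain ⟨k, rfl⟩ : ∃ k : ℕ, m = (k:ℤ) := ⟨m.toNat, (Int.toNat_of_nonneg hm).symm⟩
  exact gauss_sum_nat k

lemma hermite (a r : ℤ) (hr : 0 < r) : a/(2*r) + (a+r)/(2*r) = a/r := by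
  have h2r : (0:ℤ) < 2*r := by linarith
  set s := a / (2*r) with hs
  set u := a % (2*r) with hu
  have h1 : a = 2*r*s + u := (Int.mul_ediv_add_emod a (2*r)).symm
  have hu0 : 0 ≤ u := Int.emod_nonneg a h2r.ne'
  have hu1 : u < 2*r := Int.emod_lt_of_pos a h2r
  have har : a/r = u/r + 2*s := by
    rw [show a = u + r*(2*s) by linarith]
    exact Int.add_mul_ediv_left u (2*s) hr.ne'
  have haar : (a+r)/(2*r) = (u+r)/(2*r) + s := by
    rw [show a + r = (u+r) + (2*r)*s by linarith]
    exact Int.add_mul_ediv_left (u+r) s h2r.ne'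
  rcases lt_or_ge u r with h | h
  · rw [har, haar, Int.ediv_eq_zero_of_lt hu0 h,
      Int.ediv_eq_zero_of_lt (by omega) (by omega)]
    ring
  · have e1 : u/r = 1 := by
      rw [show u = (u - r) + r*1 by ring, Int.add_mul_ediv_left _ _ hr.ne',
        Int.ediv_eq_zero_of_lt (by omega) (by omega)]
      ring
    have e2 : (u+r)/(2*r) = 1 := by
      rw [show u + r = (u - r) + (2*r)*1 by ring, Int.add_mul_ediv_left _ _ h2r.ne',
        Int.ediv_eq_zero_of_lt (by omega) (by omega)]
      ring
    rw [har, haar, e1, e2]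
    ring

lemma pairid (p r k : ℤ) (hr : 0 < r) (hk1 : 0 < k) (hk2 : k < r)
    (hcop : Int.gcd r p = 1) : (k*p)/r + ((r-k)*p)/r = p - 1 := by
  have hnd : ¬ (r ∣ k*p) := by
    intro hdvd
    have hdk : r ∣ k := Int.dvd_of_dvd_mul_left_of_gcd_one hdvd hcop
    have := Int.le_of_dvd hk1 hdk
    omega
  set d := (k*p)/r with hd
  set u := (k*p) % r with huu
  have h1 : k*p = r*d + u := (Int.mul_ediv_add_emod _ _).symm
  have hu0 : 0 ≤ u := Int.emod_nonneg _ hr.ne'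
  have hu1 : u < r := Int.emod_lt_of_pos _ hr
  have hune : u ≠ 0 := by
    intro h
    exact hnd (Int.dvd_of_emod_eq_zero h)
  have e1 : (r-k)*p = r*p - k*p := by ring
  have e2 : r*(p - d - 1) = r*p - r*d - r := by ring
  have h2 : (r-k)*p = (r - u) + r*(p - d - 1) := by linarith
  rw [h2, Int.add_mul_ediv_left _ _ hr.ne',
    Int.ediv_eq_zero_of_lt (by omega) (by omega)]
  ring

lemma rowT {p r m n : ℤ} (t : ℤ) (hp : 0 < p) (hr : 0 < r) (hop : Odd p) (hre : Even r)
    (hm : p = 2*m + 1) (hn : r = 2*n) (hrp : r < p) (ht1 : 1 ≤ t) (ht2 : t ≤ m) :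
    (Finset.Icc 1 n).filter (fun j => (2*j-1)*p < (2*t-1)*r) =
      Finset.Icc 1 (((2*t-1)*r + p)/(2*p)) := by
  have h2p : (0:ℤ) < 2*p := by linarith
  set Y := (2*t-1)*r + p with hY
  set d := Y/(2*p) with hd
  have hYodd : Odd Y := ((hre.mul_left (2*t-1)).add_odd hop)
  have hY1 : Y = 2*p*d + Y % (2*p) := (Int.mul_ediv_add_emod Y (2*p)).symm
  have hm0 : 0 ≤ Y % (2*p) := Int.emod_nonneg Y h2p.ne'
  have hm1 : Y % (2*p) < 2*p := Int.emod_lt_of_pos Y h2p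
  have hY0 : 0 < Y := by nlinarith
  have hd0 : 0 ≤ d := Int.ediv_nonneg hY0.le h2p.le
  -- Y < 2*p*(n+1)
  have hYlt : Y < 2*p*(n+1) := by nlinarith
  have hdn : d ≤ n := by
    have : 2*p*d ≤ Y := by omega
    have h4 : 2*p*d < 2*p*(n+1) := by omega
    have := lt_of_mul_lt_mul_left h4 h2p.le
    omega
  ext j
  simp only [Finset.mem_filter, Finset.mem_Icc]
  constructor
  · rintro ⟨⟨hj1, _⟩, hlt⟩
    have h1 : 2*p*j < Y := by nlinarith
    refine ⟨hj1, ?_⟩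
    by_contra hcon
    push_neg at hcon
    have h5 : 2*p*(d+1) ≤ 2*p*j := mul_le_mul_of_nonneg_left (by omega) h2p.le
    have e : 2*p*(d+1) = 2*p*d + 2*p := by ring
    linarith
  · rintro ⟨hj1, hjd⟩
    have h2 : 2*p*j ≤ 2*p*d := mul_le_mul_of_nonneg_left hjd h2p.le
    have hne : 2*p*j ≠ Y := by
      intro h
      exact (Int.not_odd_iff_even.mpr ⟨p*j, by ring⟩) (h ▸ hYodd)
    have h3 : 2*p*j < Y := lt_of_le_of_ne (by linarith) hne
    refine ⟨⟨hj1, by omega⟩, by nlinarith⟩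

lemma rowJ {p r m n : ℤ} (j : ℤ) (hp : 0 < p) (hr : 0 < r) (hop : Odd p) (hre : Even r)
    (hm : p = 2*m + 1) (hn : r = 2*n) (hrp : r < p) (hj1 : 1 ≤ j) (hj2 : j ≤ n) :
    (Finset.Icc 1 m).filter (fun t => (2*j-1)*p < (2*t-1)*r) =
      Finset.Icc (((2*j-1)*p + r)/(2*r) + 1) m := by
  have h2r : (0:ℤ) < 2*r := by linarith
  set Z := (2*j-1)*p + r with hZ
  set F := Z/(2*r) with hF
  have hZ1 : Z = 2*r*F + Z % (2*r) := (Int.mul_ediv_add_emod Z (2*r)).symm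
  have hm0 : 0 ≤ Z % (2*r) := Int.emod_nonneg Z h2r.ne'
  have hm1 : Z % (2*r) < 2*r := Int.emod_lt_of_pos Z h2r
  have hZ0 : 0 < Z := by nlinarith
  have hF0 : 0 ≤ F := Int.ediv_nonneg hZ0.le h2r.le
  ext t
  simp only [Finset.mem_filter, Finset.mem_Icc]
  constructor
  · rintro ⟨⟨_, ht2⟩, hlt⟩
    have h1 : Z < 2*r*t := by nlinarith
    refine ⟨?_, ht2⟩
    by_contra hcon
    push_neg at hcon
    have h5 : 2*r*t ≤ 2*r*F := mul_le_mul_of_nonneg_left (by omega) h2r.le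
    linarith
  · rintro ⟨ht1, ht2⟩
    have h2 : 2*r*(F+1) ≤ 2*r*t := mul_le_mul_of_nonneg_left (by omega) h2r.le
    have e : 2*r*(F+1) = 2*r*F + 2*r := by ring
    have h3 : Z < 2*r*t := by linarith
    refine ⟨⟨by omega, ht2⟩, by nlinarith⟩

lemma recip {p r m n : ℤ} (hp : 0 < p) (hr : 0 < r) (hop : Odd p) (hre : Even r)
    (hm : p = 2*m + 1) (hn : r = 2*n) (hrp : r < p) (hm1 : 1 ≤ m) (hn1 : 1 ≤ n) :
    ∑ t ∈ Finset.Icc (1:ℤ) m, ((2*t-1)*r + p)/(2*p) =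
      ∑ j ∈ Finset.Icc (1:ℤ) n, (m - ((2*j-1)*p + r)/(2*r)) := by
  have h2p : (0:ℤ) < 2*p := by linarith
  have h2r : (0:ℤ) < 2*r := by linarith
  have hfib1 := card_filter_prod_fst (Finset.Icc 1 m) (Finset.Icc 1 n)
    (fun t j => (2*j-1)*p < (2*t-1)*r)
  have hfib2 := card_filter_prod_snd (Finset.Icc 1 m) (Finset.Icc 1 n)
    (fun t j => (2*j-1)*p < (2*t-1)*r)
  have key : (∑ t ∈ Finset.Icc (1:ℤ) m,
      (((Finset.Icc (1:ℤ) n).filter (fun j => (2*j-1)*p < (2*t-1)*r)).card : ℤ)) =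
      ∑ j ∈ Finset.Icc (1:ℤ) n,
      (((Finset.Icc (1:ℤ) m).filter (fun t => (2*j-1)*p < (2*t-1)*r)).card : ℤ) := by
    rw [← Nat.cast_sum, ← Nat.cast_sum, ← hfib1, ← hfib2]
  calc ∑ t ∈ Finset.Icc (1:ℤ) m, ((2*t-1)*r + p)/(2*p)
      = ∑ t ∈ Finset.Icc (1:ℤ) m,
        (((Finset.Icc (1:ℤ) n).filter (fun j => (2*j-1)*p < (2*t-1)*r)).card : ℤ) := by
        apply Finset.sum_congr rfl
        intro t ht
        rw [Finset.mem_Icc] at ht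
        rw [rowT t hp hr hop hre hm hn hrp ht.1 ht.2, Int.card_Icc]
        have hY0 : (0:ℤ) < (2*t-1)*r + p := by nlinarith
        have hd0 : 0 ≤ ((2*t-1)*r + p)/(2*p) := Int.ediv_nonneg hY0.le h2p.le
        rw [show ((2*t-1)*r + p)/(2*p) + 1 - 1 = ((2*t-1)*r + p)/(2*p) by ring]
        exact (Int.toNat_of_nonneg hd0).symm
    _ = ∑ j ∈ Finset.Icc (1:ℤ) n,
        (((Finset.Icc (1:ℤ) m).filter (fun t => (2*j-1)*p < (2*t-1)*r)).card : ℤ) := key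
    _ = ∑ j ∈ Finset.Icc (1:ℤ) n, (m - ((2*j-1)*p + r)/(2*r)) := by
        apply Finset.sum_congr rfl
        intro j hj
        rw [Finset.mem_Icc] at hj
        rw [rowJ j hp hr hop hre hm hn hrp hj.1 hj.2, Int.card_Icc]
        set F := ((2*j-1)*p + r)/(2*r) with hF
        have hFm : F ≤ m := by
          have hZlt : (2*j-1)*p + r < 2*r*(m+1) := by nlinarith
          have h1 : 2*r*F ≤ (2*j-1)*p + r := by
            have h := Int.mul_ediv_add_emod ((2*j-1)*p + r) (2*r)
            have h' := Int.emod_nonneg ((2*j-1)*p + r) h2r.ne'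
            rw [← hF] at h
            omega
          have h4 : 2*r*F < 2*r*(m+1) := by omega
          have := lt_of_mul_lt_mul_left h4 h2r.le
          omega
        rw [show m + 1 - (F + 1) = m - F by ring]
        exact Int.toNat_of_nonneg (by omega)

lemma sumEF {p r m n : ℤ} (hp : 0 < p) (hr : 0 < r) (hm : p = 2*m + 1) (hn : r = 2*n)
    (hn1 : 1 ≤ n) (hcop : Int.gcd r p = 1) :
    (∑ j ∈ Finset.Icc (1:ℤ) n, ((2*j-1)*p)/(2*r)) +
      (∑ j ∈ Finset.Icc (1:ℤ) n, ((2*j-1)*p + r)/(2*r)) = m*n := by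
  have hcomb : (∑ j ∈ Finset.Icc (1:ℤ) n, ((2*j-1)*p)/(2*r)) +
      (∑ j ∈ Finset.Icc (1:ℤ) n, ((2*j-1)*p + r)/(2*r)) =
      ∑ j ∈ Finset.Icc (1:ℤ) n, ((2*j-1)*p)/r := by
    rw [← Finset.sum_add_distrib]
    exact Finset.sum_congr rfl fun j _ => hermite ((2*j-1)*p) r hr
  rw [hcomb]
  have hrefl : ∑ j ∈ Finset.Icc (1:ℤ) n, ((2*j-1)*p)/r =
      ∑ j ∈ Finset.Icc (1:ℤ) n, ((2*(n+1-j)-1)*p)/r := by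
    apply Finset.sum_nbij' (fun j => n+1-j) (fun j => n+1-j)
    · intro a ha
      simp only [Finset.mem_Icc] at ha ⊢
      omega
    · intro a ha
      simp only [Finset.mem_Icc] at ha ⊢
      omega
    · intro a _
      ring
    · intro a _
      ring
    · intro a _
      have e : n+1-(n+1-a) = a := by ring
      rw [e]
  have hpair : ∀ j ∈ Finset.Icc (1:ℤ) n, ((2*j-1)*p)/r + ((2*(n+1-j)-1)*p)/r = p - 1 := by
    intro j hj
    rw [Finset.mem_Icc] at hj
    have e : (2*(n+1-j)-1) = r - (2*j-1) := by omega
    rw [e]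
    exact pairid p r (2*j-1) hr (by omega) (by omega) hcop
  have h2 : 2 * ∑ j ∈ Finset.Icc (1:ℤ) n, ((2*j-1)*p)/r = n*(p-1) := by
    calc 2 * ∑ j ∈ Finset.Icc (1:ℤ) n, ((2*j-1)*p)/r
        = (∑ j ∈ Finset.Icc (1:ℤ) n, ((2*j-1)*p)/r) +
          (∑ j ∈ Finset.Icc (1:ℤ) n, ((2*(n+1-j)-1)*p)/r) := by
          rw [← hrefl]; ring
      _ = ∑ j ∈ Finset.Icc (1:ℤ) n, (((2*j-1)*p)/r + ((2*(n+1-j)-1)*p)/r) :=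
          Finset.sum_add_distrib.symm
      _ = ∑ _j ∈ Finset.Icc (1:ℤ) n, (p-1) := Finset.sum_congr rfl hpair
      _ = n*(p-1) := by
          rw [Finset.sum_const, Int.card_Icc, nsmul_eq_mul]
          rw [show n + 1 - 1 = n by ring, Int.toNat_of_nonneg (by omega)]
  have h3 : n*(p-1) = 2*(m*n) := by rw [hm]; ring
  linarith

end main

/-- Proposition 2.3: formula for `σ(p, p+r)` with `p` odd, `r` even, `2 ≤ r < p`. -/
theorem torusSigma_p_p_add_r (p r : ℤ) (hp : 0 < p) (hodd : Odd p) (hre : Even r)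
    (hr2 : 2 ≤ r) (hrp : r < p) (hco : Int.gcd p (p + r) = 1) :
    torusSigma p (p + r) =
      -((p - 1) * (p + r + 1)) / 2 +
        2 * ∑ i ∈ Finset.Icc (1 : ℤ) (r / 2),
          (⌊(((2 * i - 1) * p : ℤ) : ℚ) / ((2 * r : ℤ) : ℚ)⌋ -
            ⌊(((2 * i - 1) * p + r : ℤ) : ℚ) / ((2 * r : ℤ) : ℚ)⌋) := by
  obtain ⟨m, hm⟩ := hodd
  have hodd : Odd p := ⟨m, hm⟩
  obtain ⟨n, hn'⟩ := hre
  have hre : Even r := ⟨n, hn'⟩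
  have hm : p = 2*m + 1 := by omega
  have hn : r = 2*n := by omega
  have hm1 : 1 ≤ m := by omega
  have hn1 : 1 ≤ n := by omega
  have hr0 : 0 < r := by omega
  have hq : 0 < p + r := by omega
  have h2r : (0:ℤ) < 2*r := by omega
  have hoq : Odd (p + r) := hodd.add_even hre
  -- coprimality of r and p
  have hcop : Int.gcd r p = 1 := by
    rw [Int.gcd_comm]
    rw [← Int.isCoprime_iff_gcd_eq_one] at hco ⊢
    have := hco.add_mul_left_right (-1)
    simpa using this
  -- main structural facts
  have hA := sigma_sum p (p+r) hp hq hodd hoq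
  have hB := sigmaPlus_eq_two_mul p (p+r) hp hq
  have hC := low_eq_sum p (p+r) m hp hq hodd hoq hm hm1
  have hreidx : ∑ i ∈ Finset.Icc (1:ℤ) m, ((p+r)*(p-2*i))/(2*p) =
      ∑ t ∈ Finset.Icc (1:ℤ) m, ((p+r)*(2*t-1))/(2*p) := by
    apply Finset.sum_nbij' (fun i => m+1-i) (fun t => m+1-t)
    · intro a ha
      simp only [Finset.mem_Icc] at ha ⊢
      omega
    · intro a ha
      simp only [Finset.mem_Icc] at ha ⊢
      omega
    · intro a _
      ring
    · intro a _
      ring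
    · intro a ha
      simp only [Finset.mem_Icc] at ha
      have e : p - 2*a = 2*(m+1-a) - 1 := by omega
      rw [e]
  have hsplit : ∀ t ∈ Finset.Icc (1:ℤ) m,
      ((p+r)*(2*t-1))/(2*p) = (t-1) + ((2*t-1)*r + p)/(2*p) := by
    intro t _
    have e : (p+r)*(2*t-1) = ((2*t-1)*r + p) + (2*p)*(t-1) := by ring
    rw [e, Int.add_mul_ediv_left _ _ (by omega : (2*p) ≠ 0)]
    ring
  have hL : (((Finset.Ioo 0 p ×ˢ Finset.Ioo 0 (p+r)).filter
      (fun x => 2*(x.1*(p+r) + x.2*p) < p*(p+r))).card : ℤ) =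
      (∑ t ∈ Finset.Icc (1:ℤ) m, (t-1)) +
      (∑ t ∈ Finset.Icc (1:ℤ) m, ((2*t-1)*r + p)/(2*p)) := by
    rw [hC, hreidx, Finset.sum_congr rfl hsplit, Finset.sum_add_distrib]
  have hG := gauss_sum m (by omega)
  have hrecip := recip hp hr0 hodd hre hm hn hrp hm1 hn1
  have hS : ∑ t ∈ Finset.Icc (1:ℤ) m, ((2*t-1)*r + p)/(2*p) =
      n*m - ∑ j ∈ Finset.Icc (1:ℤ) n, ((2*j-1)*p + r)/(2*r) := by
    rw [hrecip, Finset.sum_sub_distrib, Finset.sum_const, Int.card_Icc, nsmul_eq_mul]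
    rw [show n + 1 - 1 = n by ring, Int.toNat_of_nonneg (by omega)]
  have hEF := sumEF hp hr0 hm hn hn1 hcop
  -- rewrite the RHS of the goal
  have hidx : r / 2 = n := by omega
  have hT : (∑ i ∈ Finset.Icc (1:ℤ) n,
      (⌊(((2 * i - 1) * p : ℤ) : ℚ) / ((2 * r : ℤ) : ℚ)⌋ -
        ⌊(((2 * i - 1) * p + r : ℤ) : ℚ) / ((2 * r : ℤ) : ℚ)⌋)) =
      (∑ j ∈ Finset.Icc (1:ℤ) n, ((2*j-1)*p)/(2*r)) -
      (∑ j ∈ Finset.Icc (1:ℤ) n, ((2*j-1)*p + r)/(2*r)) := by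
    rw [← Finset.sum_sub_distrib]
    apply Finset.sum_congr rfl
    intro i _
    rw [floor_int_div ((2*i-1)*p) (2*r) h2r, floor_int_div ((2*i-1)*p + r) (2*r) h2r]
  have hconst : -((p - 1) * (p + r + 1)) / 2 = -(m*(p+r+1)) := by
    rw [show -((p - 1) * (p + r + 1)) = 2 * (-(m*(p+r+1))) by rw [hm]; ring]
    exact Int.mul_ediv_cancel_left _ (by norm_num)
  rw [hidx, hT, hconst]
  unfold torusSigma
  rw [hB] at hA ⊢
  rw [hL] at hA ⊢
  -- now pure arithmetic
  subst hm hn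
  linear_combination (-1)*hA + 2*hG + 4*hS - 2*hEF
end

section
/- Let r ≥ 2 be an even integer and n ≥ 1 an integer, and let p = 2nr + 1 or p = 2nr − 1 (so that p > r and gcd(p, p+r) = 1). Then σ(p, p+r) = −(p−1)(p+r+1)/2 if p = 2nr + 1, and σ(p, p+r) = −(p−1)(p+r+1)/2 − r if p = 2nr − 1. -/
lemma ratlt (p q i j c d : ℤ) (hp : 0 < p) (hq : 0 < q) (hd : 0 < d) :
    ((c : ℚ)/(d : ℚ) < (i : ℚ) / (p : ℚ) + (j : ℚ) / (q : ℚ) ↔ c * (p*q) < d * (i*q + p*j)) ∧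
    ((i : ℚ) / (p : ℚ) + (j : ℚ) / (q : ℚ) < (c : ℚ)/(d : ℚ) ↔ d * (i*q + p*j) < c * (p*q)) := by
  have hp' : (0:ℚ) < p := by exact_mod_cast hp
  have hq' : (0:ℚ) < q := by exact_mod_cast hq
  have hd' : (0:ℚ) < d := by exact_mod_cast hd
  have hsum : (i : ℚ) / (p : ℚ) + (j : ℚ) / (q : ℚ) = ((i*q + p*j : ℤ) : ℚ) / ((p*q : ℤ) : ℚ) := by
    push_cast
    rw [div_add_div _ _ (ne_of_gt hp') (ne_of_gt hq')]
  have hpq' : (0:ℚ) < ((p*q : ℤ) : ℚ) := by positivity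
  constructor
  · rw [hsum, div_lt_div_iff₀ hd' hpq']
    norm_cast
    constructor <;> intro h <;> linarith
  · rw [hsum, div_lt_div_iff₀ hpq' hd']
    norm_cast
    constructor <;> intro h <;> linarith

lemma key (p q : ℤ) (hp : 0 < p) (hq : 0 < q) (hodd : Odd (p * q)) :
    torusSigma p q =
      4 * (((Finset.Ioo 0 p ×ˢ Finset.Ioo 0 q).filter
        (fun x => 2 * (x.1 * q + p * x.2) < p * q)).card : ℤ) - (p - 1) * (q - 1) := by
  classical
  set S := Finset.Ioo 0 p ×ˢ Finset.Ioo 0 q with hS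
  set PA : ℤ × ℤ → Prop := fun x => 2 * (x.1 * q + p * x.2) < p * q with hPA
  set PC : ℤ × ℤ → Prop := fun x => 3 * (p * q) < 2 * (x.1 * q + p * x.2) with hPC
  -- pointwise facts for members of S
  have hmem : ∀ x : ℤ × ℤ, x ∈ S → 0 < x.1 ∧ x.1 < p ∧ 0 < x.2 ∧ x.2 < q := by
    intro x hx
    rw [hS, Finset.mem_product, Finset.mem_Ioo, Finset.mem_Ioo] at hx
    tauto
  have hdisj : Disjoint (S.filter PA) (S.filter PC) := by
    rw [Finset.disjoint_filter]
    intro x _ h1 h2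
    have hpq : 0 < p * q := mul_pos hp hq
    rw [hPA] at h1
    rw [hPC] at h2
    linarith
  have hplus : sigmaPlus p q = ((S.filter PA).card : ℤ) + ((S.filter PC).card : ℤ) := by
    rw [sigmaPlus]
    rw [Finset.filter_congr (fun x hx => ?_ : ∀ x ∈ S, _ ↔ (PA x ∨ PC x))]
    · rw [Finset.filter_or, Finset.card_union_of_disjoint hdisj]
      push_cast; ring
    · obtain ⟨h1, h2, h3, h4⟩ := hmem x hx
      have e1 := (ratlt p q x.1 x.2 1 2 hp hq (by norm_num)).2
      have e2 := (ratlt p q x.1 x.2 3 2 hp hq (by norm_num)).1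
      have e3 := (ratlt p q x.1 x.2 2 1 hp hq (by norm_num)).2
      have e4 := (ratlt p q x.1 x.2 0 1 hp hq (by norm_num)).1
      push_cast at e1 e2 e3 e4
      rw [hPA, hPC]
      simp only
      constructor
      · rintro (⟨_, hb⟩ | ⟨hc, _⟩)
        · left; have := e1.mp hb; linarith
        · right; have := e2.mp hc; linarith
      · rintro (ha | hc)
        · left
          constructor
          · rw [show ((0:ℚ)) = (0:ℚ)/(1:ℚ) by norm_num]
            exact e4.mpr (by nlinarith)
          · exact e1.mpr (by linarith)
        · right
          constructor
          · exact e2.mpr (by linarith)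
          · rw [show ((2:ℚ)) = (2:ℚ)/(1:ℚ) by norm_num]
            exact e3.mpr (by nlinarith)
  have hminus : sigmaMinus p q = ((S.filter (fun x => ¬(PA x ∨ PC x))).card : ℤ) := by
    rw [sigmaMinus]
    rw [Finset.filter_congr (fun x hx => ?_ : ∀ x ∈ S, _ ↔ ¬(PA x ∨ PC x))]
    obtain ⟨h1, h2, h3, h4⟩ := hmem x hx
    have e1 := (ratlt p q x.1 x.2 1 2 hp hq (by norm_num)).1
    have e2 := (ratlt p q x.1 x.2 3 2 hp hq (by norm_num)).2
    push_cast at e1 e2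
    rw [hPA, hPC]
    simp only
    rw [e1, e2]
    obtain ⟨m, hm⟩ := hodd
    constructor
    · rintro ⟨ha, hb⟩
      push_neg
      exact ⟨by linarith, by linarith⟩
    · rintro h
      push_neg at h
      obtain ⟨ha, hb⟩ := h
      have hne1 : 2 * (x.1 * q + p * x.2) ≠ p * q := by omega
      have hne2 : 2 * (x.1 * q + p * x.2) ≠ 3 * (p * q) := by omega
      omega
  have hcardS : ((S.filter (fun x => PA x ∨ PC x)).card : ℤ) +
      ((S.filter (fun x => ¬(PA x ∨ PC x))).card : ℤ) = (p - 1) * (q - 1) := by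
    have := Finset.card_filter_add_card_filter_not (s := S) (fun x => PA x ∨ PC x)
    have hcard : (S.card : ℤ) = (p - 1) * (q - 1) := by
      rw [hS, Finset.card_product]
      push_cast
      rw [Int.card_Ioo, Int.card_Ioo]
      rw [Int.toNat_of_nonneg (by omega), Int.toNat_of_nonneg (by omega)]
      push_cast
      ring
    rw [← hcard]
    exact_mod_cast this
  have hAC : (S.filter PC).card = (S.filter PA).card := by
    apply Finset.card_bij' (fun x _ => (p - x.1, q - x.2)) (fun x _ => (p - x.1, q - x.2))
    · intro a ha
      rw [Finset.mem_filter] at ha ⊢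
      obtain ⟨haS, hc⟩ := ha
      obtain ⟨h1, h2, h3, h4⟩ := hmem a haS
      simp only [hPC] at hc
      constructor
      · rw [hS, Finset.mem_product, Finset.mem_Ioo, Finset.mem_Ioo]
        simp only
        omega
      · simp only [hPA]; nlinarith
    · intro a ha
      rw [Finset.mem_filter] at ha ⊢
      obtain ⟨haS, hc⟩ := ha
      obtain ⟨h1, h2, h3, h4⟩ := hmem a haS
      simp only [hPA] at hc
      constructor
      · rw [hS, Finset.mem_product, Finset.mem_Ioo, Finset.mem_Ioo]
        simp only
        omega
      · simp only [hPC]; nlinarith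
    · intro a _; simp
    · intro a _; simp
  have hsplit : ((S.filter (fun x => PA x ∨ PC x)).card : ℤ) =
      ((S.filter PA).card : ℤ) + ((S.filter PC).card : ℤ) := by
    rw [Finset.filter_or, Finset.card_union_of_disjoint hdisj]
    push_cast; ring
  rw [torusSigma, hplus, hminus]
  rw [hsplit] at hcardS
  have hAC' : ((S.filter PC).card : ℤ) = ((S.filter PA).card : ℤ) := by exact_mod_cast hAC
  have hgoalfold : (S.filter (fun x => 2 * (x.1 * q + p * x.2) < p * q)) = S.filter PA := rfl
  rw [hgoalfold]
  linarith

lemma cardA (p q : ℤ) (hp : 2 < p) (hq : p < q) :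
    ((((Finset.Ioo 0 p ×ˢ Finset.Ioo 0 q).filter
        (fun x => 2 * (x.1 * q + p * x.2) < p * q)).card : ℤ))
    = ∑ i ∈ Finset.Ioo 0 p, (((q * (p - 2*i) - 1) / (2*p)).toNat : ℤ) := by
  classical
  have hq0 : 0 < q := by omega
  have h2p : (0:ℤ) < 2*p := by omega
  rw [Finset.card_eq_sum_card_fiberwise (f := Prod.fst) (t := Finset.Ioo 0 p) ?side]
  case side =>
    intro x hx
    rw [Finset.mem_coe, Finset.mem_filter, Finset.mem_product] at hx
    exact hx.1.1
  push_cast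
  apply Finset.sum_congr rfl
  intro i hi
  rw [Finset.mem_Ioo] at hi
  set M : ℤ := (q * (p - 2*i) - 1) / (2*p) with hM
  have hMq : M < q := by
    rw [hM]
    rw [Int.ediv_lt_iff_lt_mul h2p]
    nlinarith
  have hfib : ((Finset.Ioo 0 p ×ˢ Finset.Ioo 0 q).filter
        (fun x => 2 * (x.1 * q + p * x.2) < p * q)).filter (fun x => x.1 = i)
      = (Finset.Ioc 0 M).image (fun j => (i, j)) := by
    ext x
    simp only [Finset.mem_filter, Finset.mem_product, Finset.mem_Ioo, Finset.mem_image,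
      Finset.mem_Ioc]
    constructor
    · rintro ⟨⟨⟨hi1, hj1⟩, hcond⟩, hx1⟩
      refine ⟨x.2, ⟨hj1.1, ?_⟩, ?_⟩
      · rw [hM, Int.le_ediv_iff_mul_le h2p]
        subst hx1
        nlinarith
      · rw [← hx1]
    · rintro ⟨j, ⟨hj0, hjM⟩, rfl⟩
      have hcond : 2 * (i * q + p * j) < p * q := by
        have := (Int.le_ediv_iff_mul_le h2p).mp (hM ▸ hjM)
        nlinarith
      exact ⟨⟨⟨⟨hi.1, hi.2⟩, ⟨hj0, lt_of_le_of_lt hjM hMq⟩⟩, hcond⟩, rfl⟩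
  rw [hfib, Finset.card_image_of_injective _ (fun a b h => by simpa using h), Int.card_Ioc]
  simp

lemma gaussIco (L : ℤ) (hL : 0 ≤ L) : (∑ t ∈ Finset.Ico (0:ℤ) L, t) * 2 = L * (L - 1) := by
  refine Int.le_induction (motive := fun M _ => (∑ t ∈ Finset.Ico (0:ℤ) M, t) * 2 = M * (M - 1))
    (by simp) (fun M hM ih => ?_) L hL
  have hins : Finset.Ico (0:ℤ) (M+1) = insert M (Finset.Ico (0:ℤ) M) := by
    ext x; simp only [Finset.mem_Ico, Finset.mem_insert]; omega
  rw [hins, Finset.sum_insert (by simp)]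
  nlinarith [ih]

lemma gaussIcc (K : ℤ) (hK : 0 ≤ K) : (∑ k ∈ Finset.Icc (1:ℤ) K, k) * 2 = K * (K + 1) := by
  refine Int.le_induction (motive := fun M _ => (∑ k ∈ Finset.Icc (1:ℤ) M, k) * 2 = M * (M + 1))
    (by simp) (fun M hM ih => ?_) K hK
  have hins : Finset.Icc (1:ℤ) (M+1) = insert (M+1) (Finset.Icc (1:ℤ) M) := by
    ext x; simp only [Finset.mem_Icc, Finset.mem_insert]; omega
  rw [hins, Finset.sum_insert (by simp)]
  nlinarith [ih]

lemma rowsum (p r L : ℤ) (hL : p = 2*L+1) (hLpos : 1 ≤ L) (hr : 0 < r) :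
    ∑ i ∈ Finset.Ioo 0 p, ((((p+r) * (p - 2*i) - 1) / (2*p)).toNat : ℤ)
    = ∑ t ∈ Finset.Ico (0:ℤ) L, (t + (p + r - 1 + 2*r*t) / (2*p)) := by
  have h2p : (0:ℤ) < 2*p := by omega
  rw [← Finset.sum_subset (s₁ := Finset.Ioc 0 L) (by intro x hx; rw [Finset.mem_Ioc] at hx; rw [Finset.mem_Ioo]; omega) ?zero]
  case zero =>
    intro i hio hni
    rw [Finset.mem_Ioo] at hio
    rw [Finset.mem_Ioc] at hni
    have hiL : L < i := by omega
    have hneg : (p+r) * (p - 2*i) - 1 < 0 := by nlinarith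
    have := Int.ediv_neg_of_neg_of_pos hneg h2p
    simp [Int.toNat_of_nonpos (le_of_lt this)]
  apply Finset.sum_bij' (fun i _ => L - i) (fun t _ => L - t)
  · intro i hi; rw [Finset.mem_Ioc] at hi; rw [Finset.mem_Ico]; omega
  · intro t ht; rw [Finset.mem_Ico] at ht; rw [Finset.mem_Ioc]; omega
  · intro i _; omega
  · intro t _; omega
  · intro i hi
    rw [Finset.mem_Ioc] at hi
    set t := L - i with htdef
    have hval : (p+r) * (p - 2*i) - 1 = (p + r - 1 + 2*r*t) + (2*p) * t := by
      rw [htdef, hL]; ring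
    rw [hval, Int.add_mul_ediv_left _ _ (by omega : (2:ℤ)*p ≠ 0)]
    have hy0 : 0 ≤ (p + r - 1 + 2*r*t) := by nlinarith [hi.1, hi.2]
    have : 0 ≤ (p + r - 1 + 2*r*t) / (2*p) := Int.ediv_nonneg hy0 (by omega)
    rw [Int.toNat_of_nonneg (by omega)]
    ring

lemma card_mult (c y K : ℤ) (hc : 0 < c) (hy : 0 ≤ y) (hK : y < (K+1)*c) :
    (((Finset.Icc 1 K).filter (fun k => k*c ≤ y)).card : ℤ) = y / c := by
  have hdiv : y / c ≤ K := by
    have := (Int.ediv_lt_iff_lt_mul hc).mpr hK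
    omega
  have hfe : (Finset.Icc 1 K).filter (fun k => k*c ≤ y) = Finset.Icc 1 (y / c) := by
    ext k
    simp only [Finset.mem_filter, Finset.mem_Icc]
    constructor
    · rintro ⟨⟨h1, _⟩, h2⟩
      exact ⟨h1, (Int.le_ediv_iff_mul_le hc).mpr h2⟩
    · rintro ⟨h1, h2⟩
      exact ⟨⟨h1, le_trans h2 hdiv⟩, (Int.le_ediv_iff_mul_le hc).mp h2⟩
  rw [hfe, Int.card_Icc]
  have h0 : 0 ≤ y / c := Int.ediv_nonneg hy (le_of_lt hc)
  rw [Int.toNat_of_nonneg (by omega)]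
  ring

lemma Teval (n s p L : ℤ) (hn : 1 ≤ n) (hs : 1 ≤ s)
    (hcase : (p = 4*n*s + 1 ∧ L = 2*n*s) ∨ (p = 4*n*s - 1 ∧ L = 2*n*s - 1)) :
    ∑ t ∈ Finset.Ico (0:ℤ) L, (p + 2*s - 1 + 2*(2*s)*t) / (2*p)
      = s*(L+n) - n*s*(s+1) := by
  classical
  have hp3 : 3 ≤ p := by rcases hcase with ⟨h1, _⟩ | ⟨h1, _⟩ <;> nlinarith
  have hLn : n ≤ L := by rcases hcase with ⟨_, h2⟩ | ⟨_, h2⟩ <;> nlinarith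
  have h2p : (0:ℤ) < 2*p := by omega
  have step1 : ∀ t ∈ Finset.Ico (0:ℤ) L, (p + 2*s - 1 + 2*(2*s)*t) / (2*p)
      = (((Finset.Icc 1 s).filter (fun k => k*(2*p) ≤ p + 2*s - 1 + 2*(2*s)*t)).card : ℤ) := by
    intro t ht
    rw [Finset.mem_Ico] at ht
    rw [card_mult _ _ _ h2p (by nlinarith) ?bnd]
    case bnd =>
      rcases hcase with ⟨h1, h2⟩ | ⟨h1, h2⟩ <;> nlinarith [ht.1, ht.2]
  rw [Finset.sum_congr rfl step1]
  rw [← Nat.cast_sum]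
  have step2 : ∑ t ∈ Finset.Ico (0:ℤ) L,
      ((Finset.Icc 1 s).filter (fun k => k*(2*p) ≤ p + 2*s - 1 + 2*(2*s)*t)).card
      = ∑ k ∈ Finset.Icc (1:ℤ) s,
        ((Finset.Ico (0:ℤ) L).filter (fun t => k*(2*p) ≤ p + 2*s - 1 + 2*(2*s)*t)).card := by
    simp only [Finset.card_filter]
    rw [Finset.sum_comm]
  rw [step2]
  have step3 : ∀ k ∈ Finset.Icc (1:ℤ) s,
      (((Finset.Ico (0:ℤ) L).filter (fun t => k*(2*p) ≤ p + 2*s - 1 + 2*(2*s)*t)).card : ℤ)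
      = L + n - 2*n*k := by
    intro k hk
    rw [Finset.mem_Icc] at hk
    have hcond : ∀ t : ℤ, (k*(2*p) ≤ p + 2*s - 1 + 2*(2*s)*t) ↔ 2*n*k - n ≤ t := by
      intro t
      constructor
      · intro h
        by_contra hlt
        push_neg at hlt
        have htle : t ≤ 2*n*k - n - 1 := by omega
        rcases hcase with ⟨h1, _⟩ | ⟨h1, _⟩ <;> nlinarith [hk.1, hk.2]
      · intro h
        rcases hcase with ⟨h1, _⟩ | ⟨h1, _⟩ <;> nlinarith [hk.1, hk.2]
    have hfe : (Finset.Ico (0:ℤ) L).filter (fun t => k*(2*p) ≤ p + 2*s - 1 + 2*(2*s)*t)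
        = Finset.Ico (2*n*k - n) L := by
      ext t
      simp only [Finset.mem_filter, Finset.mem_Ico, hcond]
      have h0 : 0 ≤ 2*n*k - n := by nlinarith [hk.1]
      omega
    rw [hfe, Int.card_Ico]
    have hle : 2*n*k - n ≤ L := by
      rcases hcase with ⟨_, h2⟩ | ⟨_, h2⟩ <;> nlinarith [hk.2]
    rw [Int.toNat_of_nonneg (by omega)]
    ring
  rw [Nat.cast_sum, Finset.sum_congr rfl step3]
  have hIcc : ((s + 1 - 1).toNat : ℤ) = s := by rw [Int.toNat_of_nonneg (by omega)]; ring
  have hsum2 : (∑ k ∈ Finset.Icc (1:ℤ) s, 2*n*k) = n * (s * (s+1)) := by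
    rw [← Finset.mul_sum]
    have := gaussIcc s (by omega)
    nlinarith [this]
  rw [Finset.sum_sub_distrib, Finset.sum_const, Int.card_Icc, hsum2, nsmul_eq_mul, hIcc]
  ring


/-- Proposition 2.4: `σ(p, p+r)` for `p = 2nr ± 1`, `r` even, `r ≥ 2`, `n ≥ 1`. -/
theorem torusSigma_two_n_r (r n : ℤ) (hre : Even r) (hr : 2 ≤ r) (hn : 1 ≤ n) :
    (∀ p : ℤ, p = 2 * n * r + 1 →
      torusSigma p (p + r) = -((p - 1) * (p + r + 1)) / 2) ∧
    (∀ p : ℤ, p = 2 * n * r - 1 →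
      torusSigma p (p + r) = -((p - 1) * (p + r + 1)) / 2 - r) := by
  obtain ⟨s, hrs⟩ := hre
  have hs : 1 ≤ s := by omega
  have main : ∀ p L : ℤ, p = 2*L+1 →
      ((p = 4*n*s + 1 ∧ L = 2*n*s) ∨ (p = 4*n*s - 1 ∧ L = 2*n*s - 1)) →
      torusSigma p (p + r) = 2*(L*(L-1)) + 4*(s*(L+n) - n*s*(s+1)) - (p-1)*(p+r-1) := by
    intro p L hpL hcase
    have hLpos : 1 ≤ L := by
      rcases hcase with ⟨h1, h2⟩ | ⟨h1, h2⟩ <;> nlinarith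
    have hp2 : 2 < p := by omega
    have hodd : Odd (p * (p+r)) := by
      have h1 : Odd p := ⟨L, by omega⟩
      have h2 : Odd (p+r) := ⟨L + s, by omega⟩
      exact h1.mul h2
    rw [key p (p+r) (by omega) (by omega) hodd]
    rw [cardA p (p+r) hp2 (by omega)]
    rw [rowsum p r L hpL hLpos (by omega)]
    rw [Finset.sum_add_distrib]
    have hG := gaussIco L (by omega)
    have hT : ∑ t ∈ Finset.Ico (0:ℤ) L, (p + r - 1 + 2*r*t)/(2*p) = s*(L+n) - n*s*(s+1) := by
      have hr2 : r = 2*s := by omega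
      rw [hr2]
      exact Teval n s p L hn hs hcase
    rw [hT]
    have : p + r - 1 = p + r + -1 := by ring
    linarith [hG]
  constructor
  · intro p hp
    have h1 : p = 4*n*s + 1 := by rw [hp, hrs]; ring
    have hmain := main p (2*n*s) (by rw [h1]; ring) (Or.inl ⟨h1, rfl⟩)
    have hrhs : -((p-1)*(p+r+1)) / 2 = -((2*n*s)*(p+r+1)) := by
      have he : -((p-1)*(p+r+1)) = (-((2*n*s)*(p+r+1))) * 2 := by rw [h1]; ring
      rw [he, Int.mul_ediv_cancel _ (by norm_num)]
    rw [hmain, hrhs, h1, hrs]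
    ring
  · intro p hp
    have h1 : p = 4*n*s - 1 := by rw [hp, hrs]; ring
    have hmain := main p (2*n*s - 1) (by rw [h1]; ring) (Or.inr ⟨h1, rfl⟩)
    have hrhs : -((p-1)*(p+r+1)) / 2 = -((2*n*s - 1)*(p+r+1)) := by
      have he : -((p-1)*(p+r+1)) = (-((2*n*s - 1)*(p+r+1))) * 2 := by rw [h1]; ring
      rw [he, Int.mul_ediv_cancel _ (by norm_num)]
    rw [hmain, hrhs, h1, hrs]
    ring
end

section
/- Let p ≥ 1 be an odd integer. Then σ(p, p+4) = −(p−1)(p+5)/2 if p ≡ 1 or p ≡ 3 (mod 8), and σ(p, p+4) = −(p−1)(p+5)/2 − 4 if p ≡ 5 or p ≡ 7 (mod 8). -/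
open Finset


lemma frac_rw (p q i j : ℤ) (hp : 0 < p) (hq : 0 < q) :
    (i:ℚ)/(p:ℚ) + (j:ℚ)/(q:ℚ) = ((i*q + j*p : ℤ) : ℚ) / ((p*q : ℤ) : ℚ) := by
  have hp' : (p:ℚ) ≠ 0 := by positivity
  have hq' : (q:ℚ) ≠ 0 := by positivity
  push_cast
  field_simp



-- integer-form filters
noncomputable def plusSet (p q : ℤ) : Finset (ℤ × ℤ) :=
  (Finset.Ioo 0 p ×ˢ Finset.Ioo 0 q).filter (fun x =>
    (0 < x.1*q + x.2*p ∧ 2*(x.1*q + x.2*p) < p*q) ∨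
    (3*(p*q) < 2*(x.1*q + x.2*p) ∧ x.1*q + x.2*p < 2*(p*q)))

noncomputable def minusSet (p q : ℤ) : Finset (ℤ × ℤ) :=
  (Finset.Ioo 0 p ×ˢ Finset.Ioo 0 q).filter (fun x =>
    p*q < 2*(x.1*q + x.2*p) ∧ 2*(x.1*q + x.2*p) < 3*(p*q))

lemma div_lt_half (n P : ℤ) (hP : 0 < P) :
    ((n:ℚ)/(P:ℚ) < 1/2) ↔ 2*n < P := by
  have hP' : (0:ℚ) < P := by exact_mod_cast hP
  rw [div_lt_iff₀ hP']
  constructor <;> intro h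
  · have : (2*n : ℚ) < (P:ℚ) := by linarith
    exact_mod_cast this
  · have : (2*n : ℚ) < (P:ℚ) := by exact_mod_cast h
    linarith

lemma half_lt_div (n P : ℤ) (hP : 0 < P) :
    (1/2 < (n:ℚ)/(P:ℚ)) ↔ P < 2*n := by
  have hP' : (0:ℚ) < P := by exact_mod_cast hP
  rw [lt_div_iff₀ hP']
  constructor <;> intro h
  · have : (P:ℚ) < (2*n : ℚ) := by linarith
    exact_mod_cast this
  · have : (P:ℚ) < (2*n : ℚ) := by exact_mod_cast h
    linarith

lemma div_lt_3half (n P : ℤ) (hP : 0 < P) :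
    ((n:ℚ)/(P:ℚ) < 3/2) ↔ 2*n < 3*P := by
  have hP' : (0:ℚ) < P := by exact_mod_cast hP
  rw [div_lt_iff₀ hP']
  constructor <;> intro h
  · have : (2*n : ℚ) < (3*P : ℚ) := by linarith
    exact_mod_cast this
  · have : (2*n : ℚ) < (3*P : ℚ) := by exact_mod_cast h
    linarith

lemma threehalf_lt_div (n P : ℤ) (hP : 0 < P) :
    (3/2 < (n:ℚ)/(P:ℚ)) ↔ 3*P < 2*n := by
  have hP' : (0:ℚ) < P := by exact_mod_cast hP
  rw [lt_div_iff₀ hP']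
  constructor <;> intro h
  · have : (3*P : ℚ) < (2*n : ℚ) := by linarith
    exact_mod_cast this
  · have : (3*P : ℚ) < (2*n : ℚ) := by exact_mod_cast h
    linarith

lemma div_lt_two (n P : ℤ) (hP : 0 < P) :
    ((n:ℚ)/(P:ℚ) < 2) ↔ n < 2*P := by
  have hP' : (0:ℚ) < P := by exact_mod_cast hP
  rw [div_lt_iff₀ hP']
  constructor <;> intro h
  · have : (n : ℚ) < (2*P : ℚ) := by linarith
    exact_mod_cast this
  · have : (n : ℚ) < (2*P : ℚ) := by exact_mod_cast h
    linarith

lemma zero_lt_div (n P : ℤ) (hP : 0 < P) :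
    (0 < (n:ℚ)/(P:ℚ)) ↔ 0 < n := by
  have hP' : (0:ℚ) < P := by exact_mod_cast hP
  rw [lt_div_iff₀ hP']
  simp

lemma sigmaPlus_eq (p q : ℤ) (hp : 0 < p) (hq : 0 < q) :
    sigmaPlus p q = ((plusSet p q).card : ℤ) := by
  unfold sigmaPlus plusSet
  congr 2
  apply Finset.filter_congr
  intro x hx
  have hPpos : 0 < p*q := mul_pos hp hq
  simp only [frac_rw p q x.1 x.2 hp hq, zero_lt_div _ _ hPpos, div_lt_half _ _ hPpos,
    threehalf_lt_div _ _ hPpos, div_lt_two _ _ hPpos]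

lemma sigmaMinus_eq (p q : ℤ) (hp : 0 < p) (hq : 0 < q) :
    sigmaMinus p q = ((minusSet p q).card : ℤ) := by
  unfold sigmaMinus minusSet
  congr 2
  apply Finset.filter_congr
  intro x hx
  have hPpos : 0 < p*q := mul_pos hp hq
  simp only [frac_rw p q x.1 x.2 hp hq, half_lt_div _ _ hPpos, div_lt_3half _ _ hPpos]

noncomputable def Mset (p q : ℤ) : Finset (ℤ × ℤ) :=
  (Finset.Ioo 0 p ×ˢ Finset.Ioo 0 q).filter (fun x => 2*(x.1*q + x.2*p) < p*q)

noncomputable def M'set (p q : ℤ) : Finset (ℤ × ℤ) :=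
  (Finset.Ioo 0 p ×ˢ Finset.Ioo 0 q).filter (fun x => 3*(p*q) < 2*(x.1*q + x.2*p))

-- bounds on n for members
lemma n_bounds (p q a b : ℤ) (hq : 0 < q) (hp : 0 < p)
    (ha : 0 < a) (ha' : a < p) (hb : 0 < b) (hb' : b < q) :
    0 < a*q + b*p ∧ a*q + b*p < 2*(p*q) := by
  constructor
  · positivity
  · have h1 : a*q ≤ (p-1)*q := mul_le_mul_of_nonneg_right (by omega) hq.le
    have h2 : b*p ≤ (q-1)*p := mul_le_mul_of_nonneg_right (by omega) hp.le
    nlinarith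

lemma card_sum (p q : ℤ) (hp : 0 < p) (hq : 0 < q) (hodd : (p*q) % 2 = 1) :
    (plusSet p q).card + (minusSet p q).card = (p-1).toNat * (q-1).toNat := by
  have hfil : plusSet p q = (Finset.Ioo 0 p ×ˢ Finset.Ioo 0 q).filter
      (fun x => ¬(p*q < 2*(x.1*q + x.2*p) ∧ 2*(x.1*q + x.2*p) < 3*(p*q))) := by
    unfold plusSet
    apply Finset.filter_congr
    intro x hx
    simp only [Finset.mem_product, Finset.mem_Ioo] at hx
    obtain ⟨hb1, hb2⟩ := n_bounds p q x.1 x.2 hq hp hx.1.1 hx.1.2 hx.2.1 hx.2.2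
    generalize x.1*q + x.2*p = n at *
    generalize p*q = P at *
    constructor <;> intro h <;> omega
  rw [hfil]
  unfold minusSet
  rw [add_comm, Finset.card_filter_add_card_filter_not]
  rw [Finset.card_product, Int.card_Ioo, Int.card_Ioo]
  congr 1 <;> omega

lemma plus_twice (p q : ℤ) (hp : 0 < p) (hq : 0 < q) :
    (plusSet p q).card = 2 * (Mset p q).card := by
  have hsplit : plusSet p q = Mset p q ∪ M'set p q := by
    unfold plusSet Mset M'set
    rw [← Finset.filter_or]
    apply Finset.filter_congr
    intro x hx
    simp only [Finset.mem_product, Finset.mem_Ioo] at hx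
    obtain ⟨hb1, hb2⟩ := n_bounds p q x.1 x.2 hq hp hx.1.1 hx.1.2 hx.2.1 hx.2.2
    have hP : 0 < p*q := mul_pos hp hq
    generalize x.1*q + x.2*p = n at *
    generalize p*q = P at *
    constructor <;> intro h <;> omega
  have hdisj : Disjoint (Mset p q) (M'set p q) := by
    rw [Finset.disjoint_left]
    intro x hx hx'
    unfold Mset M'set at *
    simp only [Finset.mem_filter] at hx hx'
    have hP : 0 < p*q := mul_pos hp hq
    omega
  have hcard : (M'set p q).card = (Mset p q).card := by
    apply Finset.card_nbij (fun x => (p - x.1, q - x.2))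
    · intro x hx
      unfold M'set at hx
      unfold Mset
      simp only [Finset.mem_coe, Finset.coe_filter, Set.mem_setOf_eq, Finset.mem_filter, Finset.mem_product, Finset.mem_Ioo] at *
      refine ⟨⟨⟨by omega, by omega⟩, by omega, by omega⟩, ?_⟩
      have : 2*((p - x.1)*q + (q - x.2)*p) = 4*(p*q) - 2*(x.1*q + x.2*p) := by ring
      omega
    · intro x hx y hy hxy
      simp only [Prod.mk.injEq, Prod.ext_iff] at *
      omega
    · intro x hx
      refine ⟨(p - x.1, q - x.2), ?_, ?_⟩
      · unfold Mset at hx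
        unfold M'set
        simp only [Set.mem_toFinset, Finset.coe_filter, Set.mem_setOf_eq,
          Finset.mem_product, Finset.mem_Ioo, Finset.mem_coe, Finset.mem_filter] at *
        refine ⟨⟨⟨by omega, by omega⟩, by omega, by omega⟩, ?_⟩
        have : 2*((p - x.1)*q + (q - x.2)*p) = 4*(p*q) - 2*(x.1*q + x.2*p) := by ring
        omega
      · simp only [Prod.ext_iff]
        exact ⟨by omega, by omega⟩
  rw [hsplit, Finset.card_union_of_disjoint hdisj, hcard]
  ring


lemma Mcard_sum (p q : ℤ) :
    (Mset p q).card = ∑ i ∈ Finset.Ioo (0:ℤ) p,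
      ((Finset.Ioo (0:ℤ) q).filter (fun j => 2*(i*q + j*p) < p*q)).card := by
  unfold Mset
  rw [Finset.card_eq_sum_card_fiberwise (f := Prod.fst) (t := Finset.Ioo 0 p)
    (fun x hx => by simp only [Finset.mem_coe, Finset.mem_filter, Finset.mem_product] at hx; exact hx.1.1)]
  apply Finset.sum_congr rfl
  intro i hi
  apply Finset.card_nbij (fun x => x.2)
  · intro x hx
    simp only [Finset.mem_coe, Finset.mem_filter, Finset.mem_product] at *
    obtain ⟨⟨⟨h1, h2⟩, h3⟩, h4⟩ := hx
    subst h4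
    exact ⟨h2, h3⟩
  · intro x hx y hy hxy
    simp only [Finset.coe_filter, Set.mem_setOf_eq] at hx hy
    obtain ⟨-, hx2⟩ := hx
    obtain ⟨-, hy2⟩ := hy
    exact Prod.ext (hx2.trans hy2.symm) hxy
  · intro j hj
    simp only [Finset.coe_filter, Set.mem_setOf_eq, Finset.mem_coe, Finset.mem_filter,
      Set.mem_image] at *
    refine ⟨(i, j), ⟨⟨?_, ?_⟩, rfl⟩, rfl⟩
    · exact Finset.mem_product.mpr ⟨hi, hj.1⟩
    · exact hj.2

lemma inner_eq (p q i : ℤ) (hp : 0 < p) (hq : 0 < q) (hi : 0 < i) (hi' : i < p) :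
    (Finset.Ioo (0:ℤ) q).filter (fun j => 2*(i*q + j*p) < p*q)
      = Finset.Ioc 0 ((p*q - 2*i*q - 1)/(2*p)) := by
  have h2p : (0:ℤ) < 2*p := by omega
  have hub : (p*q - 2*i*q - 1)/(2*p) < q := by
    rw [Int.ediv_lt_iff_lt_mul h2p]
    have h1 : q ≤ i*q := le_mul_of_one_le_left hq.le (by omega)
    have h2 : 0 < p*q := mul_pos hp hq
    nlinarith
  ext j
  simp only [Finset.mem_filter, Finset.mem_Ioo, Finset.mem_Ioc]
  constructor
  · rintro ⟨⟨hj0, hjq⟩, hcond⟩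
    refine ⟨hj0, ?_⟩
    rw [Int.le_ediv_iff_mul_le h2p]
    have e : j*(2*p) + 2*(i*q) = 2*(i*q + j*p) := by ring
    linarith
  · rintro ⟨hj0, hjB⟩
    have hjq : j < q := lt_of_le_of_lt hjB hub
    have hmul : j*(2*p) ≤ p*q - 2*i*q - 1 := (Int.le_ediv_iff_mul_le h2p).mp hjB
    have e : j*(2*p) + 2*(i*q) = 2*(i*q + j*p) := by ring
    exact ⟨⟨hj0, hjq⟩, by linarith⟩

lemma sum_gauss_base (h : ℤ) (hh : 0 ≤ h) :
    ∑ i ∈ Finset.Ioo (0:ℤ) (h+1), ((h - i).toNat : ℤ) = h*(h-1)/2 := by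
  obtain ⟨n, rfl⟩ : ∃ n : ℕ, h = (n:ℤ) := ⟨h.toNat, by omega⟩
  clear hh
  induction n with
  | zero =>
    have he : Finset.Ioo (0:ℤ) (((0:ℕ):ℤ)+1) = ∅ := by
      ext x
      simp only [Finset.mem_Ioo, Finset.notMem_empty, iff_false, not_and]
      omega
    rw [he]
    simp
  | succ n ih =>
    set h : ℤ := (n:ℤ) with hdef
    have hcast : ((n+1 : ℕ) : ℤ) = h + 1 := by push_cast; ring
    rw [hcast]
    have hins : Finset.Ioo (0:ℤ) (h+1+1) = insert (h+1) (Finset.Ioo (0:ℤ) (h+1)) := by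
      rw [Finset.Ioo_insert_right (by positivity : (0:ℤ) < h+1)]
      ext x
      simp only [Finset.mem_Ioo, Finset.mem_Ioc]
      omega
    rw [hins, Finset.sum_insert (by simp)]
    have hpt : ∀ i ∈ Finset.Ioo (0:ℤ) (h+1), ((h + 1 - i).toNat : ℤ) = ((h - i).toNat : ℤ) + 1 := by
      intro i hi
      simp only [Finset.mem_Ioo] at hi
      omega
    rw [Finset.sum_congr rfl hpt, Finset.sum_add_distrib, ih, Finset.sum_const,
      Int.card_Ioo]
    obtain ⟨k, hk0⟩ := Int.even_mul_succ_self (h-1)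
    have hk : h*(h-1) = 2*k := by linear_combination hk0
    have hk2 : (h+1)*(h+1-1) = 2*(k+h) := by linear_combination hk0
    rw [hk, hk2, Int.mul_ediv_cancel_left _ (by norm_num), Int.mul_ediv_cancel_left _ (by norm_num)]
    simp only [nsmul_eq_mul]
    have hh0 : (0:ℤ) ≤ h := by positivity
    have hcard : ((h + 1 - 0 - 1).toNat : ℤ) = h := by omega
    rw [hcard]
    omega

lemma sum_gauss (h N : ℤ) (hh : 0 ≤ h) (hN : h < N) :
    ∑ i ∈ Finset.Ioo (0:ℤ) N, ((h - i).toNat : ℤ) = h*(h-1)/2 := by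
  obtain ⟨d, rfl⟩ : ∃ d : ℕ, N = h + 1 + (d:ℤ) := ⟨(N - h - 1).toNat, by omega⟩
  clear hN
  induction d with
  | zero =>
    push_cast
    rw [add_zero]
    exact sum_gauss_base h hh
  | succ d ih =>
    have hcast : h + 1 + ((d+1 : ℕ) : ℤ) = (h + 1 + (d:ℤ)) + 1 := by push_cast; ring
    rw [hcast]
    set N : ℤ := h + 1 + (d:ℤ) with hdef
    have hN0 : 0 < N := by positivity
    have hins : Finset.Ioo (0:ℤ) (N+1) = insert N (Finset.Ioo (0:ℤ) N) := by
      rw [Finset.Ioo_insert_right hN0]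
      ext x
      simp only [Finset.mem_Ioo, Finset.mem_Ioc]
      omega
    rw [hins, Finset.sum_insert (by simp), ih]
    have hd0 : (0:ℤ) ≤ (d:ℤ) := by positivity
    have : ((h - N).toNat : ℤ) = 0 := by omega
    rw [this]
    ring

lemma term_eq (p i : ℤ) (hp : 1 ≤ p) (hodd : p % 2 = 1) (hi : 0 < i) (hi' : i < p) :
    (((p*(p+4) - 2*i*(p+4) - 1)/(2*p)).toNat : ℤ)
      = (((p-1)/2 - i).toNat : ℤ) + (if 8*i ≤ 3*p-1 then 1 else 0)
        + (if 8*i ≤ p-1 then 1 else 0) := by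
  set h := (p-1)/2 with hh
  have hp2 : p = 2*h+1 := by omega
  have h2p : (0:ℤ) < 2*p := by omega
  by_cases hcase : i ≤ h
  · have key : p*(p+4) - 2*i*(p+4) - 1 = (5*p - 1 - 8*i) + (h-i)*(2*p) := by
      rw [hp2]; ring
    rw [key, Int.add_mul_ediv_right _ _ (by omega : (2:ℤ)*p ≠ 0)]
    by_cases hc2 : 8*i ≤ p - 1
    · have he : (5*p - 1 - 8*i)/(2*p) = 2 := by
        have key2 : 5*p - 1 - 8*i = (p - 1 - 8*i) + 2*(2*p) := by ring
        rw [key2, Int.add_mul_ediv_right _ _ (by omega : (2:ℤ)*p ≠ 0),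
          Int.ediv_eq_zero_of_lt (by omega) (by omega)]
        ring
      rw [he, if_pos (by omega : 8*i ≤ 3*p-1), if_pos hc2]
      omega
    · by_cases hc1 : 8*i ≤ 3*p-1
      · have he : (5*p - 1 - 8*i)/(2*p) = 1 := by
          have key2 : 5*p - 1 - 8*i = (3*p - 1 - 8*i) + 1*(2*p) := by ring
          rw [key2, Int.add_mul_ediv_right _ _ (by omega : (2:ℤ)*p ≠ 0),
            Int.ediv_eq_zero_of_lt (by omega) (by omega)]
          ring
        rw [he, if_pos hc1, if_neg hc2]
        omega
      · have he : (5*p - 1 - 8*i)/(2*p) = 0 :=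
          Int.ediv_eq_zero_of_lt (by omega) (by omega)
        rw [he, if_neg hc1, if_neg hc2]
        omega
  · have hid : p*(p+4) - 2*i*(p+4) = (p-2*i)*(p+4) := by ring
    have hneg : p*(p+4) - 2*i*(p+4) - 1 < 0 := by
      have h1 : (p - 2*i) ≤ -1 := by omega
      have h2 : (p - 2*i)*(p+4) ≤ (-1)*(p+4) := mul_le_mul_of_nonneg_right h1 (by omega)
      omega
    have hlt : (p*(p+4) - 2*i*(p+4) - 1)/(2*p) < 0 := Int.ediv_neg_of_neg_of_pos hneg h2p
    rw [if_neg (by omega : ¬(8*i ≤ 3*p-1)), if_neg (by omega : ¬(8*i ≤ p-1))]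
    omega

lemma sum_ind (p c : ℤ) (h0 : 0 ≤ c) (hcp : c < 8*p) :
    ∑ i ∈ Finset.Ioo (0:ℤ) p, (if 8*i ≤ c then (1:ℤ) else 0) = c/8 := by
  rw [Finset.sum_boole]
  have hf : (Finset.Ioo (0:ℤ) p).filter (fun i => 8*i ≤ c) = Finset.Ioc 0 (c/8) := by
    ext x
    simp only [Finset.mem_filter, Finset.mem_Ioo, Finset.mem_Ioc]
    omega
  rw [hf, Int.card_Ioc]
  omega

lemma Mcard_val (p : ℤ) (hp : 1 ≤ p) (hodd : p % 2 = 1) :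
    ((Mset p (p+4)).card : ℤ)
      = ((p-1)/2)*((p-1)/2 - 1)/2 + (3*p-1)/8 + (p-1)/8 := by
  have hq : (0:ℤ) < p+4 := by omega
  rw [Mcard_sum, Nat.cast_sum]
  have hterm : ∀ i ∈ Finset.Ioo (0:ℤ) p,
      ((((Finset.Ioo (0:ℤ) (p+4)).filter
        (fun j => 2*(i*(p+4) + j*p) < p*(p+4))).card : ℤ))
      = (((p-1)/2 - i).toNat : ℤ) + (if 8*i ≤ 3*p-1 then 1 else 0)
        + (if 8*i ≤ p-1 then 1 else 0) := by
    intro i hi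
    simp only [Finset.mem_Ioo] at hi
    rw [inner_eq p (p+4) i (by omega) hq hi.1 hi.2, Int.card_Ioc, sub_zero]
    exact term_eq p i hp hodd hi.1 hi.2
  rw [Finset.sum_congr rfl hterm, Finset.sum_add_distrib, Finset.sum_add_distrib,
      sum_gauss ((p-1)/2) p (by omega) (by omega),
      sum_ind p (3*p-1) (by omega) (by omega),
      sum_ind p (p-1) (by omega) (by omega)]



/-- Proposition 2.5: `σ(p, p+4)` for `p` a positive odd integer, according to `p mod 8`. -/
theorem torusSigma_p_p_add_four (p : ℤ) (hp : 1 ≤ p) (hodd : Odd p) :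
    ((p % 8 = 1 ∨ p % 8 = 3) → torusSigma p (p + 4) = -((p - 1) * (p + 5)) / 2) ∧
    ((p % 8 = 5 ∨ p % 8 = 7) → torusSigma p (p + 4) = -((p - 1) * (p + 5)) / 2 - 4) := by
  have hp0 : (0:ℤ) < p := hp
  have hq : (0:ℤ) < p + 4 := by omega
  have hodd2 : p % 2 = 1 := Int.odd_iff.mp hodd
  have hoddP : (p*(p+4)) % 2 = 1 := by
    have h4 : Odd (p+4) := by rw [Int.odd_iff]; omega
    exact Int.odd_iff.mp (hodd.mul h4)
  have hA := card_sum p (p+4) hp0 hq hoddP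
  have hB := plus_twice p (p+4) hp0 hq
  have hMv := Mcard_val p hp hodd2
  have hsigma : torusSigma p (p+4) = 4 * ((Mset p (p+4)).card : ℤ) - (p-1)*(p+3) := by
    unfold torusSigma
    rw [sigmaPlus_eq p (p+4) hp0 hq, sigmaMinus_eq p (p+4) hp0 hq]
    have hAz : ((plusSet p (p+4)).card : ℤ) + ((minusSet p (p+4)).card : ℤ)
        = (p-1)*(p+3) := by
      have hc := congrArg (fun n : ℕ => (n : ℤ)) hA
      push_cast at hc
      rw [Int.toNat_of_nonneg (by omega : (0:ℤ) ≤ p - 1),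
        Int.toNat_of_nonneg (by omega : (0:ℤ) ≤ p + 4 - 1)] at hc
      rw [hc]; ring
    have hBz : ((plusSet p (p+4)).card : ℤ) = 2 * ((Mset p (p+4)).card : ℤ) := by
      exact_mod_cast hB
    linarith [hAz, hBz]
  obtain ⟨h, hph⟩ : ∃ h : ℤ, p = 2*h+1 := ⟨(p-1)/2, by omega⟩
  have hhval : (p-1)/2 = h := by omega
  rw [hhval] at hMv
  obtain ⟨k, hk0⟩ := Int.even_mul_succ_self (h - 1)
  have hk : h * (h - 1) = 2*k := by linear_combination hk0
  rw [hk, Int.mul_ediv_cancel_left _ (by norm_num : (2:ℤ) ≠ 0)] at hMv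
  rw [hsigma, hMv]
  subst hph
  set e1 := (3*(2*h+1)-1)/8 with he1
  set e2 := (2*h+1-1)/8 with he2
  constructor <;> intro hcase
  · have hEs : e1 + e2 = h := by omega
    have hr : -((2*h+1-1)*(2*h+1+5)) = 2*(-(2*h*h+6*h)) := by ring
    rw [hr, Int.mul_ediv_cancel_left _ (by norm_num : (2:ℤ) ≠ 0)]
    linear_combination (-2:ℤ)*hk + 4*hEs
  · have hEs : e1 + e2 = h - 1 := by omega
    have hr : -((2*h+1-1)*(2*h+1+5)) = 2*(-(2*h*h+6*h)) := by ring
    rw [hr, Int.mul_ediv_cancel_left _ (by norm_num : (2:ℤ) ≠ 0)]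
    linear_combination (-2:ℤ)*hk + 4*hEs
end

section
/- Let p and q be coprime integers with 0 < p < q. Then σ⁺(p,q) = Σ_{i=1}^{⌊(p−1)/2⌋} ⌊(p−2i)q/(2p)⌋ + Σ_{i=⌊p/2⌋+1}^{p−1} ( q − 1 − ⌊(3p−2i)q/(2p)⌋ ). -/
open Finset

private def sigPred (p q i j : ℤ) : Prop :=
  (0 < (i : ℚ) / (p : ℚ) + (j : ℚ) / (q : ℚ) ∧
    (i : ℚ) / (p : ℚ) + (j : ℚ) / (q : ℚ) < 1 / 2) ∨
  (3 / 2 < (i : ℚ) / (p : ℚ) + (j : ℚ) / (q : ℚ) ∧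
    (i : ℚ) / (p : ℚ) + (j : ℚ) / (q : ℚ) < 2)

private instance sigPredDec (p q i : ℤ) : DecidablePred (sigPred p q i) := fun _ => by
  unfold sigPred; infer_instance

private lemma aux_floor_div (a b : ℤ) (hb : 0 < b) : ⌊((a : ℤ) : ℚ) / ((b : ℤ) : ℚ)⌋ = a / b := by
  have h1 : ((b : ℤ) : ℚ) = ((b.toNat : ℕ) : ℚ) := by
    exact_mod_cast congrArg (Int.cast : ℤ → ℚ) (Int.toNat_of_nonneg hb.le).symm
  rw [h1, Rat.floor_intCast_div_natCast, Int.toNat_of_nonneg hb.le]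

private lemma bridge1 (p q i j : ℤ) (hp : 0 < p) (hq : 0 < q) :
    ((i : ℚ) / (p : ℚ) + (j : ℚ) / (q : ℚ) < 1 / 2) ↔ j * (2 * p) < (p - 2 * i) * q := by
  have hp' : (0 : ℚ) < (p : ℚ) := by exact_mod_cast hp
  have hq' : (0 : ℚ) < (q : ℚ) := by exact_mod_cast hq
  rw [div_add_div _ _ (ne_of_gt hp') (ne_of_gt hq'),
    div_lt_div_iff₀ (by positivity) (by norm_num : (0:ℚ) < 2),
    show (j * (2 * p) < (p - 2 * i) * q) ↔
      ((j * (2 * p) : ℤ) : ℚ) < (((p - 2 * i) * q : ℤ) : ℚ) from Int.cast_lt.symm]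
  push_cast
  constructor <;> intro h <;> nlinarith

private lemma bridge2 (p q i j : ℤ) (hp : 0 < p) (hq : 0 < q) :
    (3 / 2 < (i : ℚ) / (p : ℚ) + (j : ℚ) / (q : ℚ)) ↔ (3 * p - 2 * i) * q < j * (2 * p) := by
  have hp' : (0 : ℚ) < (p : ℚ) := by exact_mod_cast hp
  have hq' : (0 : ℚ) < (q : ℚ) := by exact_mod_cast hq
  rw [div_add_div _ _ (ne_of_gt hp') (ne_of_gt hq'),
    div_lt_div_iff₀ (by norm_num : (0:ℚ) < 2) (by positivity),
    show ((3 * p - 2 * i) * q < j * (2 * p)) ↔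
      (((3 * p - 2 * i) * q : ℤ) : ℚ) < ((j * (2 * p) : ℤ) : ℚ) from Int.cast_lt.symm]
  push_cast
  constructor <;> intro h <;> nlinarith

private lemma count1 (p q i : ℤ) (hp : 0 < p) (hq : 0 < q) (hco : Int.gcd p q = 1)
    (hi1 : 1 ≤ i) (hi2 : 2 * i < p) :
    ((((Ioo (0:ℤ) q)).filter (sigPred p q i)).card : ℤ) = (p - 2 * i) * q / (2 * p) := by
  have hp' : (0 : ℚ) < (p : ℚ) := by exact_mod_cast hp
  have hq' : (0 : ℚ) < (q : ℚ) := by exact_mod_cast hq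
  have h2p : (0 : ℤ) < 2 * p := by linarith
  have hkey : ∀ j : ℤ, j * (2 * p) = (p - 2 * i) * q → False := by
    intro j hj
    have hcop : IsCoprime (p : ℤ) q := Int.isCoprime_iff_gcd_eq_one.mpr hco
    have hpd : p ∣ (p - 2 * i) * q := ⟨2 * j, by linarith⟩
    have h1 : p ∣ (p - 2 * i) := hcop.dvd_of_dvd_mul_right hpd
    have h2 : p ∣ 2 * i := by
      rw [show 2 * i = p - (p - 2 * i) by ring]; exact dvd_sub dvd_rfl h1
    have := Int.le_of_dvd (by linarith) h2
    linarith
  set N := (p - 2 * i) * q / (2 * p) with hN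
  have hfil : (Ioo (0:ℤ) q).filter (sigPred p q i) = Icc 1 N := by
    ext j
    simp only [mem_filter, mem_Ioo, mem_Icc, sigPred]
    constructor
    · rintro ⟨⟨hj0, hjq⟩, h⟩
      refine ⟨hj0, ?_⟩
      rcases h with ⟨-, hlt⟩ | ⟨hgt, -⟩
      · rw [hN, Int.le_ediv_iff_mul_le h2p]
        exact le_of_lt ((bridge1 p q i j hp hq).mp hlt)
      · exfalso
        have h1 : (i : ℚ) / p < 1 / 2 := by
          rw [div_lt_div_iff₀ hp' (by norm_num : (0:ℚ) < 2)]
          have : (2 * i : ℚ) < p := by exact_mod_cast hi2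
          linarith
        have h2 : (j : ℚ) / q < 1 := (div_lt_one hq').mpr (by exact_mod_cast hjq)
        linarith
    · rintro ⟨hj1, hjN⟩
      have hmul : j * (2 * p) ≤ (p - 2 * i) * q := by
        rw [hN, Int.le_ediv_iff_mul_le h2p] at hjN; exact hjN
      have hmul' : j * (2 * p) < (p - 2 * i) * q := lt_of_le_of_ne hmul (hkey j)
      have hNq : N < q := by rw [hN, Int.ediv_lt_iff_lt_mul h2p]; nlinarith
      refine ⟨⟨by omega, by omega⟩, Or.inl ⟨?_, (bridge1 p q i j hp hq).mpr hmul'⟩⟩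
      have hi' : (0 : ℚ) < (i : ℚ) := by exact_mod_cast (by omega : (0:ℤ) < i)
      have hj' : (0 : ℚ) < (j : ℚ) := by exact_mod_cast (by omega : (0:ℤ) < j)
      positivity
  rw [hfil, Int.card_Icc]
  have hN0 : 0 ≤ N := Int.ediv_nonneg (by nlinarith) (by linarith)
  omega

private lemma count2 (p q i : ℤ) (hp : 0 < p) (hq : 0 < q)
    (hi1 : p < 2 * i) (hi2 : i < p) :
    ((((Ioo (0:ℤ) q)).filter (sigPred p q i)).card : ℤ) =
      q - 1 - (3 * p - 2 * i) * q / (2 * p) := by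
  have hp' : (0 : ℚ) < (p : ℚ) := by exact_mod_cast hp
  have hq' : (0 : ℚ) < (q : ℚ) := by exact_mod_cast hq
  have h2p : (0 : ℤ) < 2 * p := by linarith
  set M := (3 * p - 2 * i) * q / (2 * p) with hM
  have hM0 : 0 ≤ M := Int.ediv_nonneg (by nlinarith) (by linarith)
  have hMq : M < q := by rw [hM, Int.ediv_lt_iff_lt_mul h2p]; nlinarith
  have hfil : (Ioo (0:ℤ) q).filter (sigPred p q i) = Icc (M + 1) (q - 1) := by
    ext j
    simp only [mem_filter, mem_Ioo, mem_Icc, sigPred]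
    constructor
    · rintro ⟨⟨hj0, hjq⟩, h⟩
      refine ⟨?_, by omega⟩
      rcases h with ⟨-, hlt⟩ | ⟨hgt, -⟩
      · exfalso
        have h1 : (1 : ℚ) / 2 < (i : ℚ) / p := by
          rw [div_lt_div_iff₀ (by norm_num : (0:ℚ) < 2) hp']
          have : (p : ℚ) < 2 * i := by exact_mod_cast hi1
          linarith
        have h2 : (0 : ℚ) < (j : ℚ) / q := by
          have : (0 : ℚ) < (j : ℚ) := by exact_mod_cast hj0
          positivity
        linarith
      · have := (bridge2 p q i j hp hq).mp hgt
        have : M < j := by rw [hM, Int.ediv_lt_iff_lt_mul h2p]; exact this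
        omega
    · rintro ⟨hjM, hjq⟩
      have hbig : (3 * p - 2 * i) * q < j * (2 * p) :=
        (Int.ediv_lt_iff_lt_mul h2p).mp (by linarith)
      refine ⟨⟨by omega, by omega⟩, Or.inr ⟨(bridge2 p q i j hp hq).mpr hbig, ?_⟩⟩
      have h1 : (i : ℚ) / p < 1 := (div_lt_one hp').mpr (by exact_mod_cast hi2)
      have h2 : (j : ℚ) / q < 1 := (div_lt_one hq').mpr (by exact_mod_cast (by omega : j < q))
      linarith
  rw [hfil, Int.card_Icc]
  omega

private lemma count3 (p q i : ℤ) (hp : 0 < p) (hq : 0 < q) (hi : 2 * i = p) :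
    ((((Ioo (0:ℤ) q)).filter (sigPred p q i)).card : ℤ) = 0 := by
  have hfil : (Ioo (0:ℤ) q).filter (sigPred p q i) = ∅ := by
    ext j
    simp only [mem_filter, mem_Ioo, mem_Icc, Finset.notMem_empty, iff_false, not_and, sigPred]
    rintro ⟨hj0, hjq⟩ (⟨-, hlt⟩ | ⟨hgt, -⟩)
    · have := (bridge1 p q i j hp hq).mp hlt
      nlinarith
    · have := (bridge2 p q i j hp hq).mp hgt
      nlinarith
  rw [hfil]; simp


/-- The count `σ⁺(p,q)` expressed via floor sums. -/
theorem sigmaPlus_formula (p q : ℤ) (hp : 0 < p) (hpq : p < q) (hco : Int.gcd p q = 1) :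
    sigmaPlus p q =
      (∑ i ∈ Finset.Icc (1 : ℤ) ((p - 1) / 2),
        ⌊(((p - 2 * i) * q : ℤ) : ℚ) / ((2 * p : ℤ) : ℚ)⌋) +
      ∑ i ∈ Finset.Icc (p / 2 + 1) (p - 1),
        (q - 1 - ⌊(((3 * p - 2 * i) * q : ℤ) : ℚ) / ((2 * p : ℤ) : ℚ)⌋) := by
  have hq : 0 < q := hp.trans hpq
  have h2p : (0 : ℤ) < 2 * p := by linarith
  have h0 : sigmaPlus p q
      = ∑ i ∈ Ioo (0:ℤ) p, (((Ioo (0:ℤ) q).filter (sigPred p q i)).card : ℤ) := by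
    rw [sigmaPlus, Finset.natCast_card_filter, Finset.sum_product]
    refine Finset.sum_congr rfl fun i _ => ?_
    rw [Finset.natCast_card_filter]
    rfl
  set m := (p - 1) / 2 with hm
  have hU : Ioo (0:ℤ) p = Icc 1 m ∪ Icc (m+1) (p-1) := by
    ext i; simp only [mem_Ioo, mem_union, mem_Icc]; omega
  have hD : Disjoint (Icc (1:ℤ) m) (Icc (m+1) (p-1)) := by
    rw [Finset.disjoint_left]
    intro a ha hb
    simp only [mem_Icc] at ha hb
    omega
  rw [h0, hU, Finset.sum_union hD]
  congr 1
  · refine Finset.sum_congr rfl fun i hi => ?_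
    simp only [mem_Icc, hm] at hi
    rw [count1 p q i hp hq hco hi.1 (by omega), aux_floor_div _ _ h2p]
  · have htail : ∀ i ∈ Icc (p/2+1) (p-1),
        (((Ioo (0:ℤ) q).filter (sigPred p q i)).card : ℤ)
          = q - 1 - ⌊(((3 * p - 2 * i) * q : ℤ) : ℚ) / ((2 * p : ℤ) : ℚ)⌋ := by
      intro i hi
      simp only [mem_Icc] at hi
      rw [count2 p q i hp hq (by omega) (by omega), aux_floor_div _ _ h2p]
    rcases Int.even_or_odd p with ⟨k, hk⟩ | ⟨k, hk⟩
    · have hins : Icc (m+1) (p-1) = insert (p/2) (Icc (p/2+1) (p-1)) := by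
        ext i
        simp only [mem_Icc, Finset.mem_insert, hm]
        omega
      rw [hins, Finset.sum_insert (by simp only [mem_Icc]; omega),
        count3 p q (p/2) hp hq (by omega), zero_add]
      exact Finset.sum_congr rfl htail
    · have hm1 : m + 1 = p/2 + 1 := by omega
      rw [hm1]
      exact Finset.sum_congr rfl htail
end

section
/- Let p and q be coprime integers with 0 < p < q. Then σ⁻(p,q) = Σ_{i=1}^{⌊p/2⌋} ( q − 1 − ⌊(p−2i)q/(2p)⌋ ) + Σ_{i=⌊p/2⌋+1}^{p−1} ⌊(3p−2i)q/(2p)⌋. -/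
/-- The count `σ⁻(p,q)` expressed via floor sums. -/
theorem sigmaMinus_formula (p q : ℤ) (hp : 0 < p) (hpq : p < q) (hco : Int.gcd p q = 1) :
    sigmaMinus p q =
      (∑ i ∈ Finset.Icc (1 : ℤ) (p / 2),
        (q - 1 - ⌊(((p - 2 * i) * q : ℤ) : ℚ) / ((2 * p : ℤ) : ℚ)⌋)) +
      ∑ i ∈ Finset.Icc (p / 2 + 1) (p - 1),
        ⌊(((3 * p - 2 * i) * q : ℤ) : ℚ) / ((2 * p : ℤ) : ℚ)⌋ := by
  have hq : (0:ℤ) < q := hp.trans hpq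
  have hpQ : (0:ℚ) < (p:ℚ) := by exact_mod_cast hp
  have hqQ : (0:ℚ) < (q:ℚ) := by exact_mod_cast hq
  have h2p : (0:ℚ) < ((2*p : ℤ):ℚ) := by exact_mod_cast (by linarith : (0:ℤ) < 2*p)
  -- rewrite the defining condition as integer inequalities
  have key : ∀ i j : ℤ,
      ((1:ℚ)/2 < (i:ℚ)/(p:ℚ) + (j:ℚ)/(q:ℚ) ∧ (i:ℚ)/(p:ℚ) + (j:ℚ)/(q:ℚ) < 3/2)
        ↔ ((p - 2*i)*q < 2*p*j ∧ 2*p*j < (3*p - 2*i)*q) := by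
    intro i j
    rw [div_add_div _ _ hpQ.ne' hqQ.ne',
        div_lt_div_iff₀ (by norm_num) (mul_pos hpQ hqQ),
        div_lt_div_iff₀ (mul_pos hpQ hqQ) (by norm_num)]
    constructor
    · rintro ⟨h1, h2⟩
      constructor
      · have : (((p - 2*i)*q : ℤ):ℚ) < ((2*p*j : ℤ):ℚ) := by push_cast; linarith
        exact_mod_cast this
      · have : ((2*p*j : ℤ):ℚ) < (((3*p - 2*i)*q : ℤ):ℚ) := by push_cast; linarith
        exact_mod_cast this
    · rintro ⟨h1, h2⟩
      have h1' : (((p - 2*i)*q : ℤ):ℚ) < ((2*p*j : ℤ):ℚ) := by exact_mod_cast h1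
      have h2' : ((2*p*j : ℤ):ℚ) < (((3*p - 2*i)*q : ℤ):ℚ) := by exact_mod_cast h2
      push_cast at h1' h2'
      constructor <;> linarith
  -- the case 1 ≤ i ≤ p/2
  have count1 : ∀ i : ℤ, 0 < i → 2*i ≤ p →
      (((Finset.Ioo 0 q).filter (fun j : ℤ =>
        (1:ℚ)/2 < (i:ℚ)/(p:ℚ) + (j:ℚ)/(q:ℚ) ∧ (i:ℚ)/(p:ℚ) + (j:ℚ)/(q:ℚ) < 3/2)).card : ℤ)
        = q - 1 - ⌊(((p - 2*i)*q : ℤ):ℚ)/((2*p : ℤ):ℚ)⌋ := by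
    intro i hi h2i
    set A := ⌊(((p - 2*i)*q : ℤ):ℚ)/((2*p : ℤ):ℚ)⌋ with hA
    have hA0 : 0 ≤ A := Int.floor_nonneg.mpr (div_nonneg
      (by exact_mod_cast mul_nonneg (by linarith : (0:ℤ) ≤ p - 2*i) hq.le) h2p.le)
    have hAq : A < q := by
      rw [hA, Int.floor_lt, div_lt_iff₀ h2p]
      exact_mod_cast (by nlinarith : ((p - 2*i)*q : ℤ) < q * (2*p))
    have hset : (Finset.Ioo 0 q).filter (fun j : ℤ =>
        (1:ℚ)/2 < (i:ℚ)/(p:ℚ) + (j:ℚ)/(q:ℚ) ∧ (i:ℚ)/(p:ℚ) + (j:ℚ)/(q:ℚ) < 3/2)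
        = Finset.Ioo A q := by
      ext j
      simp only [Finset.mem_filter, Finset.mem_Ioo, key]
      constructor
      · rintro ⟨⟨hj0, hjq⟩, hL, hU⟩
        refine ⟨?_, hjq⟩
        rw [hA, Int.floor_lt, div_lt_iff₀ h2p]
        exact_mod_cast (by linarith : ((p - 2*i)*q : ℤ) < j * (2*p))
      · rintro ⟨hAj, hjq⟩
        have hL : ((p - 2*i)*q : ℤ) < j * (2*p) := by
          have := (div_lt_iff₀ h2p).mp (Int.floor_lt.mp hAj)
          exact_mod_cast this
        have hj0 : 0 < j := lt_of_le_of_lt hA0 hAj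
        refine ⟨⟨hj0, hjq⟩, by linarith, ?_⟩
        nlinarith
    rw [hset, Int.card_Ioo]
    rw [Int.toNat_of_nonneg (by omega)]
    ring
  -- the case p/2 < i ≤ p - 1
  have count2 : ∀ i : ℤ, p < 2*i → i ≤ p - 1 →
      (((Finset.Ioo 0 q).filter (fun j : ℤ =>
        (1:ℚ)/2 < (i:ℚ)/(p:ℚ) + (j:ℚ)/(q:ℚ) ∧ (i:ℚ)/(p:ℚ) + (j:ℚ)/(q:ℚ) < 3/2)).card : ℤ)
        = ⌊(((3*p - 2*i)*q : ℤ):ℚ)/((2*p : ℤ):ℚ)⌋ := by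
    intro i hpi hip
    set B := ⌊(((3*p - 2*i)*q : ℤ):ℚ)/((2*p : ℤ):ℚ)⌋ with hB
    have hB0 : 0 ≤ B := Int.floor_nonneg.mpr (div_nonneg
      (by exact_mod_cast mul_nonneg (by linarith : (0:ℤ) ≤ 3*p - 2*i) hq.le) h2p.le)
    have hBq : B < q := by
      rw [hB, Int.floor_lt, div_lt_iff₀ h2p]
      exact_mod_cast (by nlinarith : ((3*p - 2*i)*q : ℤ) < q * (2*p))
    have hne : ∀ j : ℤ, 2*p*j ≠ (3*p - 2*i)*q := by
      intro j h
      have h1 : p ∣ 2*i*q := ⟨3*q - 2*j, by linear_combination h⟩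
      have h2 : p ∣ 2*i := (Int.isCoprime_iff_gcd_eq_one.mpr hco).dvd_of_dvd_mul_right h1
      obtain ⟨k, hk⟩ := h2
      have hk1 : 1 < k := by nlinarith
      have hk2 : k < 2 := by nlinarith
      omega
    have hset : (Finset.Ioo 0 q).filter (fun j : ℤ =>
        (1:ℚ)/2 < (i:ℚ)/(p:ℚ) + (j:ℚ)/(q:ℚ) ∧ (i:ℚ)/(p:ℚ) + (j:ℚ)/(q:ℚ) < 3/2)
        = Finset.Ioc 0 B := by
      ext j
      simp only [Finset.mem_filter, Finset.mem_Ioo, Finset.mem_Ioc, key]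
      constructor
      · rintro ⟨⟨hj0, hjq⟩, hL, hU⟩
        refine ⟨hj0, ?_⟩
        rw [hB, Int.le_floor, le_div_iff₀ h2p]
        exact_mod_cast (by linarith : (j * (2*p) : ℤ) ≤ (3*p - 2*i)*q)
      · rintro ⟨hj0, hjB⟩
        have hU' : (j * (2*p) : ℤ) ≤ (3*p - 2*i)*q := by
          have := (le_div_iff₀ h2p).mp (Int.le_floor.mp hjB)
          exact_mod_cast this
        have hU : 2*p*j < (3*p - 2*i)*q :=
          lt_of_le_of_ne (by linarith) (hne j)
        refine ⟨⟨hj0, by omega⟩, by nlinarith, hU⟩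
    rw [hset, Int.card_Ioc]
    rw [Int.toNat_of_nonneg (by omega)]
    omega
  -- expand the cardinality of the product filter into a fiberwise sum
  have expand : sigmaMinus p q = ∑ i ∈ Finset.Ioc 0 (p-1),
      (((Finset.Ioo 0 q).filter (fun j : ℤ =>
        (1:ℚ)/2 < (i:ℚ)/(p:ℚ) + (j:ℚ)/(q:ℚ) ∧ (i:ℚ)/(p:ℚ) + (j:ℚ)/(q:ℚ) < 3/2)).card : ℤ) := by
    have e0 : Finset.Ioo (0:ℤ) p = Finset.Ioc 0 (p-1) := by
      ext x; simp [Finset.mem_Ioo, Finset.mem_Ioc]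
    rw [sigmaMinus, e0, Finset.card_filter, Finset.sum_product]
    push_cast
    refine Finset.sum_congr rfl fun i _ => ?_
    rw [Finset.sum_boole]
  rw [expand,
    show Finset.Ioc (0:ℤ) (p-1) = Finset.Ioc 0 (p/2) ∪ Finset.Ioc (p/2) (p-1) from
      (Finset.Ioc_union_Ioc_eq_Ioc (by omega) (by omega)).symm,
    Finset.sum_union (Finset.disjoint_left.mpr fun a ha hb => by
      simp only [Finset.mem_Ioc] at ha hb; omega),
    show Finset.Icc (1:ℤ) (p/2) = Finset.Ioc 0 (p/2) from by
      ext x; simp [Finset.mem_Icc, Finset.mem_Ioc]; omega,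
    show Finset.Icc (p/2+1) (p-1) = Finset.Ioc (p/2) (p-1) from by
      ext x; simp [Finset.mem_Icc, Finset.mem_Ioc]]
  congr 1
  · refine Finset.sum_congr rfl fun i hi => ?_
    simp only [Finset.mem_Ioc] at hi
    exact count1 i hi.1 (by omega)
  · refine Finset.sum_congr rfl fun i hi => ?_
    simp only [Finset.mem_Ioc] at hi
    exact count2 i (by omega) hi.2
end

section
/- Let p be a positive odd integer and r an even integer with 2 ≤ r < p. Then Σ_{i=1}^{(p−1)/2} ⌊((2r+1)p − (2i−1)r)/(2p)⌋ = Σ_{k=1}^{r/2} ⌊((2k−1)p + r)/(2r)⌋ + r(p−1)/4; here the summand on the left equals ⌊r + 1/2 − (2i−1)r/(2p)⌋, and r(p−1)/4 is an integer since p is odd and r is even. -/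
open Finset
lemma stepQ (p r d s i : ℤ) (hodd : Odd p) (hre : Even r)
    (hd : p = 2*d+1) (hs : r = s + s) (hr2 : 2 ≤ r) (hrp : r < p)
    (hi : i ∈ Finset.Icc (1:ℤ) d) :
    (∑ k ∈ Finset.Icc (1:ℤ) s, (if (2*k-1)*p < (2*i-1)*r then (1:ℤ) else 0))
      = ((2*i-1)*r + p)/(2*p) := by
  simp only [mem_Icc] at hi
  have hp : 0 < p := by omega
  set a := (2*i-1)*r with ha
  have ha0 : 0 ≤ a := mul_nonneg (by omega) (by omega)
  set q := (a + p)/(2*p) with hqdef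
  have hq0 : 0 ≤ q := Int.ediv_nonneg (by omega) (by omega)
  have hqs : q ≤ s := by
    by_contra h
    push_neg at h
    have h1 := (Int.le_ediv_iff_mul_le (by omega : (0:ℤ) < 2*p)).mp (by omega : s+1 ≤ q)
    have hale : a ≤ (p-2)*r := mul_le_mul_of_nonneg_right (by omega) (by omega)
    nlinarith [h1, hale, hp, hr2]
  have hne : ∀ k : ℤ, (2*k-1)*p ≠ a := by
    intro k h
    have h1 : Odd ((2*k-1)*p) := Odd.mul ⟨k-1, by ring⟩ hodd
    have h2 : Even a := hre.mul_left _
    rw [h] at h1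
    exact (Int.not_odd_iff_even.mpr h2) h1
  have key : ∀ k : ℤ, ((2*k-1)*p < a ↔ k ≤ q) := by
    intro k
    rw [hqdef, Int.le_ediv_iff_mul_le (by omega : (0:ℤ) < 2*p),
      show k*(2*p) = (2*k-1)*p + p by ring]
    constructor
    · intro h; exact add_le_add_left h.le p
    · intro h; exact lt_of_le_of_ne (by linarith) (hne k)
  have hfil : (Finset.Icc (1:ℤ) s).filter (fun k => (2*k-1)*p < a) = Finset.Icc 1 q := by
    ext k
    simp only [mem_filter, mem_Icc]
    constructor
    · rintro ⟨⟨k1, _⟩, k3⟩; exact ⟨k1, (key k).mp k3⟩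
    · rintro ⟨k1, k2⟩; exact ⟨⟨k1, k2.trans hqs⟩, (key k).mpr k2⟩
  rw [Finset.sum_boole, hfil, Int.card_Icc, show q + 1 - 1 = q by ring,
    Int.toNat_of_nonneg hq0]
lemma stepT (p r d s k : ℤ) (hodd : Odd p) (hre : Even r)
    (hd : p = 2*d+1) (hs : r = s + s) (hr2 : 2 ≤ r) (hrp : r < p)
    (hk : k ∈ Finset.Icc (1:ℤ) s) :
    (∑ i ∈ Finset.Icc (1:ℤ) d, (if ¬ ((2*k-1)*p < (2*i-1)*r) then (1:ℤ) else 0))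
      = ((2*k-1)*p + r)/(2*r) := by
  simp only [mem_Icc] at hk
  have hp : 0 < p := by omega
  set x := (2*k-1)*p with hx
  have hx0 : 0 ≤ x := mul_nonneg (by omega) (by omega)
  set t := (x + r)/(2*r) with htdef
  have ht0 : 0 ≤ t := Int.ediv_nonneg (by omega) (by omega)
  have htd : t ≤ d := by
    by_contra h
    push_neg at h
    have h1 := (Int.le_ediv_iff_mul_le (by omega : (0:ℤ) < 2*r)).mp (by omega : d+1 ≤ t)
    have hxle : x ≤ (r-1)*p := mul_le_mul_of_nonneg_right (by omega) (by omega)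
    nlinarith [h1, hxle, hp, hr2]
  have hne : ∀ i : ℤ, x ≠ (2*i-1)*r := by
    intro i h
    have h1 : Odd x := Odd.mul ⟨k-1, by ring⟩ hodd
    have h2 : Even ((2*i-1)*r) := hre.mul_left _
    rw [h] at h1
    exact (Int.not_odd_iff_even.mpr h2) h1
  have key : ∀ i : ℤ, (¬ (x < (2*i-1)*r) ↔ i ≤ t) := by
    intro i
    rw [htdef, Int.le_ediv_iff_mul_le (by omega : (0:ℤ) < 2*r),
      show i*(2*r) = (2*i-1)*r + r by ring, not_lt]
    constructor
    · intro h; exact add_le_add_left h r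
    · intro h; exact le_of_lt (lt_of_le_of_ne (by linarith) (Ne.symm (hne i)))
  have hfil : (Finset.Icc (1:ℤ) d).filter (fun i => ¬ (x < (2*i-1)*r)) = Finset.Icc 1 t := by
    ext i
    simp only [mem_filter, mem_Icc]
    constructor
    · rintro ⟨⟨i1, _⟩, i3⟩; exact ⟨i1, (key i).mp i3⟩
    · rintro ⟨i1, i2⟩; exact ⟨⟨i1, i2.trans htd⟩, (key i).mpr i2⟩
  rw [Finset.sum_boole, hfil, Int.card_Icc, show t + 1 - 1 = t by ring,
    Int.toNat_of_nonneg ht0]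
lemma floor_div_int' (a b : ℤ) (hb : 0 < b) : ⌊(a : ℚ) / ((b : ℤ) : ℚ)⌋ = a / b := by
  obtain ⟨n, rfl⟩ := Int.eq_ofNat_of_zero_le hb.le
  exact_mod_cast Rat.floor_intCast_div_natCast a n

lemma stepB (p r i : ℤ) (hp : 0 < p) (hodd : Odd p) (hre : Even r) :
    ((2*r+1)*p - (2*i-1)*r)/(2*p) = r - ((2*i-1)*r + p)/(2*p) := by
  set a := (2*i-1)*r with ha
  have hmod := Int.emod_add_mul_ediv (a + p) (2*p)
  set q := (a + p)/(2*p) with hq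
  set m := (a+p) % (2*p) with hm
  have hm0 : 0 ≤ m := Int.emod_nonneg _ (by omega)
  have hmlt : m < 2*p := Int.emod_lt_of_pos _ (by omega)
  have hmne : m ≠ 0 := by
    intro h
    have h1 : Even (a + p) := by
      rw [← hmod, h, zero_add]; exact ⟨p*q, by ring⟩
    have h2 : Odd (a + p) := (hre.mul_left _).add_odd hodd
    exact (Int.not_odd_iff_even.mpr h1) h2
  have hrw : (2*r+1)*p - a = (2*p - m) + (r - q)*(2*p) := by linear_combination hmod
  rw [hrw, Int.add_mul_ediv_right _ _ (show (2*p) ≠ 0 by omega),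
    Int.ediv_eq_zero_of_lt (by omega) (by omega), zero_add]

/-- Floor-sum identity used in the proof of Proposition 2.3:
the sum over `1 ≤ i ≤ (p-1)/2` of `⌊r + 1/2 - (2i-1)r/(2p)⌋ = ⌊((2r+1)p - (2i-1)r)/(2p)⌋`
equals the sum over `1 ≤ k ≤ r/2` of `⌊((2k-1)p + r)/(2r)⌋`, plus `r(p-1)/4`. -/
theorem floor_sum_second (p r : ℤ) (hp : 0 < p) (hodd : Odd p) (hre : Even r)
    (hr2 : 2 ≤ r) (hrp : r < p) :
    (∑ i ∈ Finset.Icc (1 : ℤ) ((p - 1) / 2),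
        ⌊(((2 * r + 1) * p - (2 * i - 1) * r : ℤ) : ℚ) / ((2 * p : ℤ) : ℚ)⌋) =
      (∑ k ∈ Finset.Icc (1 : ℤ) (r / 2),
        ⌊(((2 * k - 1) * p + r : ℤ) : ℚ) / ((2 * r : ℤ) : ℚ)⌋) + r * (p - 1) / 4 := by
  obtain ⟨d, hd⟩ := hodd
  obtain ⟨s, hs⟩ := hre
  have hd2 : (p - 1) / 2 = d := by omega
  have hs2 : r / 2 = s := by omega
  have hd1 : 1 ≤ d := by omega
  have hs1 : 1 ≤ s := by omega
  rw [hd2, hs2]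
  have cast1 : ∀ i ∈ Finset.Icc (1:ℤ) d,
      ⌊(((2 * r + 1) * p - (2 * i - 1) * r : ℤ) : ℚ) / ((2 * p : ℤ) : ℚ)⌋
        = r - ((2*i-1)*r + p)/(2*p) := by
    intro i _
    rw [floor_div_int' _ _ (by omega), stepB p r i hp ⟨d, hd⟩ ⟨s, hs⟩]
  have cast2 : ∀ k ∈ Finset.Icc (1:ℤ) s,
      ⌊(((2 * k - 1) * p + r : ℤ) : ℚ) / ((2 * r : ℤ) : ℚ)⌋
        = ((2*k-1)*p + r)/(2*r) := by
    intro k _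
    exact floor_div_int' _ _ (by omega)
  rw [Finset.sum_congr rfl cast1, Finset.sum_congr rfl cast2]
  have hQ := fun i (hi : i ∈ Finset.Icc (1:ℤ) d) =>
    stepQ p r d s i ⟨d, hd⟩ ⟨s, hs⟩ hd hs hr2 hrp hi
  have hT := fun k (hk : k ∈ Finset.Icc (1:ℤ) s) =>
    stepT p r d s k ⟨d, hd⟩ ⟨s, hs⟩ hd hs hr2 hrp hk
  have hscard : (∑ _k ∈ Finset.Icc (1:ℤ) s, (1:ℤ)) = s := by
    rw [Finset.sum_const, Int.card_Icc, show s + 1 - 1 = s by ring, nsmul_eq_mul,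
      Int.toNat_of_nonneg (by omega), mul_one]
  have inner : ∀ i ∈ Finset.Icc (1:ℤ) d,
      (∑ k ∈ Finset.Icc (1:ℤ) s, (if (2*k-1)*p < (2*i-1)*r then (1:ℤ) else 0))
      + (∑ k ∈ Finset.Icc (1:ℤ) s, (if ¬ ((2*k-1)*p < (2*i-1)*r) then (1:ℤ) else 0))
      = s := by
    intro i _
    rw [← Finset.sum_add_distrib]
    have h1 : ∀ k ∈ Finset.Icc (1:ℤ) s,
        ((if (2*k-1)*p < (2*i-1)*r then (1:ℤ) else 0)
          + (if ¬ ((2*k-1)*p < (2*i-1)*r) then (1:ℤ) else 0)) = 1 := by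
      intro k _; split_ifs <;> simp
    rw [Finset.sum_congr rfl h1, hscard]
  have keysum : (∑ i ∈ Finset.Icc (1:ℤ) d, ((2*i-1)*r + p)/(2*p))
      + (∑ k ∈ Finset.Icc (1:ℤ) s, ((2*k-1)*p + r)/(2*r)) = d * s := by
    rw [← Finset.sum_congr rfl hQ, ← Finset.sum_congr rfl hT]
    rw [show (∑ k ∈ Finset.Icc (1:ℤ) s, ∑ i ∈ Finset.Icc (1:ℤ) d,
        (if ¬ ((2*k-1)*p < (2*i-1)*r) then (1:ℤ) else 0))
      = ∑ i ∈ Finset.Icc (1:ℤ) d, ∑ k ∈ Finset.Icc (1:ℤ) s,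
        (if ¬ ((2*k-1)*p < (2*i-1)*r) then (1:ℤ) else 0) from Finset.sum_comm]
    rw [← Finset.sum_add_distrib, Finset.sum_congr rfl inner, Finset.sum_const,
      Int.card_Icc, show d + 1 - 1 = d by ring, nsmul_eq_mul,
      Int.toNat_of_nonneg (by omega)]
  rw [Finset.sum_sub_distrib, Finset.sum_const, Int.card_Icc,
    show d + 1 - 1 = d by ring, nsmul_eq_mul, Int.toNat_of_nonneg (by omega)]
  have h4 : r * (p - 1) / 4 = s * d := by
    rw [show r * (p-1) = 4 * (s * d) by rw [hd, hs]; ring]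
    exact Int.mul_ediv_cancel_left _ (by norm_num)
  have hdr : d * r = d * s + s * d := by rw [hs]; ring
  rw [h4]
  linarith [keysum, hdr]
end

section
/- Let r ≥ 4 be an even integer and p ≥ 1 an integer such that 2p ≥ (r/2 + 1)² − r/2. Then there is no integer ω with ω > p such that ω² = (p−1)(p+r+1) or ω² = (p−1)(p+r+1) + 4. -/
/-- Even-`ω` case of Theorem 1.5(1): for `r ≥ 4` even and `p ≥ 1` with
`2p ≥ (r/2 + 1)² - r/2`, there is no `ω > p` with `ω² = (p-1)(p+r+1)` or
`ω² = (p-1)(p+r+1) + 4`. -/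
theorem no_sq_even_case_one (r p : ℤ) (hre : Even r) (hr : 4 ≤ r) (hp : 1 ≤ p)
    (h2p : (r / 2 + 1) ^ 2 - r / 2 ≤ 2 * p) :
    ¬ ∃ ω : ℤ, p < ω ∧
      (ω ^ 2 = (p - 1) * (p + r + 1) ∨ ω ^ 2 = (p - 1) * (p + r + 1) + 4) := by
  obtain ⟨s, rfl⟩ : ∃ s, r = 2 * s := by
    obtain ⟨s, hs⟩ := hre; exact ⟨s, by omega⟩
  have hdiv : (2 * s) / 2 = s := by omega
  rw [hdiv] at h2p
  have hs2 : 2 ≤ s := by omega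
  rintro ⟨ω, hω, h⟩
  -- upper bound on N
  have hωle : ω ≤ p + s - 1 := by
    by_contra hcon
    push_neg at hcon
    have h1 : p + s ≤ ω := by omega
    have h2 : (p + s) ^ 2 ≤ ω ^ 2 := by nlinarith
    rcases h with h | h <;> nlinarith
  have h2 : ω ^ 2 ≤ (p + s - 1) ^ 2 := by nlinarith
  rcases h with h | h <;> nlinarith
end

section
/- Let r ≥ 4 be an even integer, n ≥ 1 an integer, and p = 2nr + 1, and suppose 2p ≥ (r/2 + 1)² − r/2. Then there is no positive integer ω such that ω² = p² + 2nr². -/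
/-- Odd-`ω` case of Theorem 1.5(1): for `r ≥ 4` even, `n ≥ 1`, `p = 2nr + 1` with
`2p ≥ (r/2 + 1)² - r/2`, there is no positive `ω` with `ω² = p² + 2nr²`. -/
theorem no_sq_odd_case_one (r n p : ℤ) (hre : Even r) (hr : 4 ≤ r) (hn : 1 ≤ n)
    (hp : p = 2 * n * r + 1) (h2p : (r / 2 + 1) ^ 2 - r / 2 ≤ 2 * p) :
    ¬ ∃ ω : ℤ, 0 < ω ∧ ω ^ 2 = p ^ 2 + 2 * n * r ^ 2 := by
  rintro ⟨ω, hω, heq⟩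
  obtain ⟨s, hs⟩ := hre
  have hrs : r = 2 * s := by omega
  have hs2 : 2 ≤ s := by omega
  have hdiv : r / 2 = s := by omega
  rw [hdiv] at h2p
  -- ω² = p² + r * p - r
  have heq' : ω ^ 2 = p ^ 2 + 2 * s * p - 2 * s := by
    rw [heq, hp]; ring_nf; nlinarith [sq_nonneg s]
  have hp9 : 9 ≤ p := by nlinarith
  have hlow : (p + s - 1) ^ 2 < ω ^ 2 := by nlinarith
  have hhigh : ω ^ 2 < (p + s) ^ 2 := by nlinarith
  have hcases : ω ≤ p + s - 1 ∨ p + s ≤ ω := by omega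
  rcases hcases with h | h
  · nlinarith
  · nlinarith
end

section
/- Let r ≥ 8 be an even integer and p ≥ 1 an integer such that 2p ≥ (r/2 − 1)² − r/2. Then there is no integer ω with ω > p such that ω² = (p−1)(p+r+1) + 2r or ω² = (p−1)(p+r+1) + 2r + 4. -/
/-- Even-`ω` case of Theorem 1.5(2): for `r ≥ 8` even and `p ≥ 1` with
`2p ≥ (r/2 - 1)² - r/2`, there is no `ω > p` with `ω² = (p-1)(p+r+1) + 2r` or
`ω² = (p-1)(p+r+1) + 2r + 4`. -/
theorem no_sq_even_case_two (r p : ℤ) (hre : Even r) (hr : 8 ≤ r) (hp : 1 ≤ p)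
    (h2p : (r / 2 - 1) ^ 2 - r / 2 ≤ 2 * p) :
    ¬ ∃ ω : ℤ, p < ω ∧
      (ω ^ 2 = (p - 1) * (p + r + 1) + 2 * r ∨
        ω ^ 2 = (p - 1) * (p + r + 1) + 2 * r + 4) := by
  rintro ⟨ω, hω, h⟩
  obtain ⟨s, hs⟩ := hre
  have hs4 : 4 ≤ s := by omega
  have hdiv : r / 2 = s := by omega
  rw [hdiv] at h2p
  have hω1 : p + 1 ≤ ω := hω
  have hupper : ω ^ 2 < (p + s) ^ 2 := by rcases h with h | h <;> nlinarith
  have hωlt : ω < p + s := by nlinarith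
  have hle : ω ≤ p + s - 1 := by omega
  have hsq : ω ^ 2 ≤ (p + s - 1) ^ 2 := by nlinarith
  rcases h with h | h <;> nlinarith
end

section
/- Let r ≥ 8 be an even integer, n ≥ 1 an integer, and p = 2nr − 1, and suppose 2p ≥ (r/2 − 1)² − r/2. Then there is no positive integer ω such that ω² = p² + 2nr². -/
/-- Odd-`ω` case of Theorem 1.5(2): for `r ≥ 8` even, `n ≥ 1`, `p = 2nr - 1` with
`2p ≥ (r/2 - 1)² - r/2`, there is no positive `ω` with `ω² = p² + 2nr²`. -/
theorem no_sq_odd_case_two (r n p : ℤ) (hre : Even r) (hr : 8 ≤ r) (hn : 1 ≤ n)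
    (hp : p = 2 * n * r - 1) (h2p : (r / 2 - 1) ^ 2 - r / 2 ≤ 2 * p) :
    ¬ ∃ ω : ℤ, 0 < ω ∧ ω ^ 2 = p ^ 2 + 2 * n * r ^ 2 := by
  rintro ⟨ω, hω, heq⟩
  obtain ⟨k, hk⟩ := hre
  have hdiv : r / 2 = k := by omega
  rw [hdiv] at h2p
  have hlo : (p + k - 1) ^ 2 < ω ^ 2 := by nlinarith
  have hhi : ω ^ 2 < (p + k) ^ 2 := by nlinarith
  have h1 : p + k - 1 < ω := lt_of_pow_lt_pow_left₀ 2 hω.le hlo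
  have h2 : ω < p + k := lt_of_pow_lt_pow_left₀ 2 (by nlinarith) hhi
  omega
end
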